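/- arXiv:1508.05883 — 7 statements merged into one kernel-verified Lean document; each statement's English description precedes it below -/
import Mathlib

section
/- Let (M,g) be a perfect fluid space-time of dimension n ≥ 4: R_{kl} = A g_{kl} + B u_k u_l with u^j u_j = −1, and assume ∇_m C_{jkl}{}^m = 0. Set γ = (n−2)A + B. Then ∇_j γ + u_j u^k ∇_k γ = 0; equivalently, the gradient of γ is proportional to u: u_j ∇_k γ = u_k ∇_j γ. -/
/-!
Raise the index of the flow, `v^a = g^{am} u_m`, so that `v^a u_a = -1` and `v^l ∇_k u_l = 0`.
Contracting the Codazzi equation with `v^j v^l` produces the same unknown term `B v^l ∇_l u_k`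
as the contracted Bianchi identity; eliminating it leaves `(n - 2) ∇_k γ = S u_k` for a scalar `S`.
Hence `∇γ` is parallel to `u`, and `u^k ∇_k γ = -S / (n - 2)` gives the first identity.
-/

open Matrix

namespace PerfectFluid

variable {ι : Type*} [Fintype ι]

/-- `ricciDeriv g B DA DB u Du k j l` is `∇_k R_{jl}` for `R_{jl} = A g_{jl} + B u_j u_l`,
where `DA k = ∇_k A`, `DB k = ∇_k B` and `Du k l = ∇_k u_l`. -/
def ricciDeriv (g : Matrix ι ι ℝ) (B : ℝ) (DA DB u : ι → ℝ) (Du : Matrix ι ι ℝ) (k : ι) :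
    Matrix ι ι ℝ :=
  fun j l => DA k * g j l + DB k * u j * u l + B * (Du k j * u l + u j * Du k l)

theorem sum_sum_mul_mul_eq_mulVec_dotProduct (ginv : Matrix ι ι ℝ) (u w : ι → ℝ) :
    ∑ i, ∑ j, ginv i j * u j * w i = ginv *ᵥ u ⬝ᵥ w := by
  simp only [dotProduct, mulVec, Finset.sum_mul]

variable {g ginv Du : Matrix ι ι ℝ} {u DA DB : ι → ℝ} {B : ℝ}

theorem mulVec_vecMul_eq_self [DecidableEq ι] (hinv : ginv * g = 1) (hsymm : ginvᵀ = ginv) :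
    (ginv *ᵥ u) ᵥ* g = u := by
  rw [← vecMul_transpose, hsymm, vecMul_vecMul, hinv, vecMul_one]

theorem mulVec_vecMul_ricciDeriv [DecidableEq ι] (hinv : ginv * g = 1) (hsymm : ginvᵀ = ginv)
    (hunit : ginv *ᵥ u ⬝ᵥ u = -1) (hDu : ∀ k, ginv *ᵥ u ⬝ᵥ Du k = 0) (k : ι) :
    (ginv *ᵥ u) ᵥ* ricciDeriv g B DA DB u Du k = (DA k - DB k) • u - B • Du k := by
  ext l
  calc ((ginv *ᵥ u) ᵥ* ricciDeriv g B DA DB u Du k) l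
      = DA k * ((ginv *ᵥ u) ᵥ* g) l + (DB k * u l + B * Du k l) * (ginv *ᵥ u ⬝ᵥ u)
          + B * u l * (ginv *ᵥ u ⬝ᵥ Du k) := by
        simp only [ricciDeriv, vecMul, dotProduct, Finset.mul_sum, ← Finset.sum_add_distrib]
        exact Finset.sum_congr rfl fun j _ => by ring
    _ = ((DA k - DB k) • u - B • Du k) l := by
        rw [mulVec_vecMul_eq_self hinv hsymm, hunit, hDu]
        simp only [Pi.sub_apply, Pi.smul_apply, smul_eq_mul]
        ring

theorem sum_inv_mul_ricciDeriv (j : ι) :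
    ∑ a, ∑ m, ginv a m * ricciDeriv g B DA DB u Du a m j
      = (DA ᵥ* (ginv * g)) j + (ginv *ᵥ u ⬝ᵥ DB + B * ∑ a, ∑ m, ginv a m * Du a m) * u j
        + B * ((ginv *ᵥ u) ᵥ* Du) j := by
  simp only [ricciDeriv, vecMul, mulVec, dotProduct, mul_apply, add_mul, Finset.mul_sum,
    Finset.sum_mul, ← Finset.sum_add_distrib]
  exact Finset.sum_congr rfl fun a _ => Finset.sum_congr rfl fun m _ => by ring

theorem codazzi_contract_once [DecidableEq ι] (hinv : ginv * g = 1) (hsymm : ginvᵀ = ginv)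
    (hunit : ginv *ᵥ u ⬝ᵥ u = -1) (hDu : ∀ k, ginv *ᵥ u ⬝ᵥ Du k = 0) {c : ℝ} {DR : ι → ℝ}
    (hC : ∀ k l j, ricciDeriv g B DA DB u Du k j l - ricciDeriv g B DA DB u Du l j k
      = c * (g j l * DR k - g j k * DR l)) (k : ι) :
    (DA k - DB k) • u - B • Du k - u k • (DA - DB) + B • Duᵀ k = c • (DR k • u - u k • DR) := by
  ext l
  calc ((DA k - DB k) • u - B • Du k - u k • (DA - DB) + B • Duᵀ k) l
      = ((ginv *ᵥ u) ᵥ* ricciDeriv g B DA DB u Du k) l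
          - ((ginv *ᵥ u) ᵥ* ricciDeriv g B DA DB u Du l) k := by
        rw [mulVec_vecMul_ricciDeriv hinv hsymm hunit hDu,
          mulVec_vecMul_ricciDeriv hinv hsymm hunit hDu]
        simp only [Pi.add_apply, Pi.sub_apply, Pi.smul_apply, smul_eq_mul, transpose_apply]
        ring
    _ = ginv *ᵥ u ⬝ᵥ fun j => c * (g j l * DR k - g j k * DR l) := by
        simp only [← hC, vecMul, dotProduct, mul_sub, Finset.sum_sub_distrib]
    _ = c * (((ginv *ᵥ u) ᵥ* g) l * DR k - ((ginv *ᵥ u) ᵥ* g) k * DR l) := by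
        simp only [vecMul, dotProduct, Finset.sum_mul, Finset.mul_sum, ← Finset.sum_sub_distrib]
        exact Finset.sum_congr rfl fun j _ => by ring
    _ = (c • (DR k • u - u k • DR)) l := by
        rw [mulVec_vecMul_eq_self hinv hsymm]
        simp only [Pi.sub_apply, Pi.smul_apply, smul_eq_mul]
        ring

theorem codazzi_contract_twice [DecidableEq ι] (hinv : ginv * g = 1) (hsymm : ginvᵀ = ginv)
    (hunit : ginv *ᵥ u ⬝ᵥ u = -1) (hDu : ∀ k, ginv *ᵥ u ⬝ᵥ Du k = 0) {c : ℝ} {DR : ι → ℝ}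
    (hC : ∀ k l j, ricciDeriv g B DA DB u Du k j l - ricciDeriv g B DA DB u Du l j k
      = c * (g j l * DR k - g j k * DR l)) (k : ι) :
    DB k - DA k - (ginv *ᵥ u ⬝ᵥ DA - ginv *ᵥ u ⬝ᵥ DB) * u k + B * ((ginv *ᵥ u) ᵥ* Du) k
      = -c * (DR k + (ginv *ᵥ u ⬝ᵥ DR) * u k) := by
  have h := congrArg (ginv *ᵥ u ⬝ᵥ ·) (codazzi_contract_once hinv hsymm hunit hDu hC k)
  simp only [dotProduct_add, dotProduct_sub, dotProduct_smul, smul_eq_mul, hunit, hDu] at h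
  rw [show ginv *ᵥ u ⬝ᵥ Duᵀ k = ((ginv *ᵥ u) ᵥ* Du) k from rfl] at h
  linear_combination h

theorem exists_grad_gamma_eq_mul {n : ℕ} (hn : 3 ≤ n) {g ginv Du : Matrix (Fin n) (Fin n) ℝ}
    {u DA DB : Fin n → ℝ} {B : ℝ} (hinv : ginv * g = 1) (hsymm : ginvᵀ = ginv)
    (hunit : ginv *ᵥ u ⬝ᵥ u = -1) (hDu : ∀ k, ginv *ᵥ u ⬝ᵥ Du k = 0)
    (hBianchi : ∀ j, ∑ a, ∑ m, ginv a m * ricciDeriv g B DA DB u Du a m j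
      = (1/2) * ((n:ℝ) * DA j - DB j))
    (hCodazzi : ∀ k l j, ricciDeriv g B DA DB u Du k j l - ricciDeriv g B DA DB u Du l j k
      = (1/(2*((n:ℝ) - 1))) * (g j l * ((n:ℝ) * DA k - DB k) - g j k * ((n:ℝ) * DA l - DB l))) :
    ∃ T : ℝ, ∀ k, ((n:ℝ) - 2) * DA k + DB k = T * u k := by
  have hn3 : (3:ℝ) ≤ n := by exact_mod_cast hn
  have hc : 2 * ((n:ℝ) - 1) * (1/(2*((n:ℝ) - 1))) = 1 := by
    field_simp [show (n:ℝ) - 1 ≠ 0 by linarith]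
  refine ⟨(2 * ((n:ℝ) - 1) * (ginv *ᵥ u ⬝ᵥ DA + B * ∑ a, ∑ m, ginv a m * Du a m)
      - ((n:ℝ) * (ginv *ᵥ u ⬝ᵥ DA) - ginv *ᵥ u ⬝ᵥ DB)) / ((n:ℝ) - 2), fun k => ?_⟩
  have hB := hBianchi k
  rw [sum_inv_mul_ricciDeriv, hinv, vecMul_one] at hB
  have hC := codazzi_contract_twice (DR := (n:ℝ) • DA - DB) hinv hsymm hunit hDu hCodazzi k
  simp only [dotProduct_sub, dotProduct_smul, Pi.sub_apply, Pi.smul_apply, smul_eq_mul] at hC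
  rw [div_mul_eq_mul_div, eq_div_iff (by linarith)]
  linear_combination (-2 * ((n:ℝ) - 1)) * (hB - hC)
    - ((n:ℝ) * DA k - DB k + ((n:ℝ) * (ginv *ᵥ u ⬝ᵥ DA) - ginv *ᵥ u ⬝ᵥ DB) * u k) * hc

theorem add_mul_sum_sum_eq_zero {ginv : Matrix ι ι ℝ} {u γ : ι → ℝ} {T : ℝ}
    (hunit : ginv *ᵥ u ⬝ᵥ u = -1) (hγ : ∀ k, γ k = T * u k) (j : ι) :
    γ j + u j * ∑ k, ∑ m, ginv k m * u m * γ k = 0 := by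
  obtain rfl : γ = T • u := funext hγ
  rw [sum_sum_mul_mul_eq_mulVec_dotProduct, dotProduct_smul, hunit, Pi.smul_apply, smul_eq_mul,
    smul_eq_mul]
  ring

end PerfectFluid

open PerfectFluid

theorem perfectFluid_gradient_gamma_general
    (n : ℕ) (hn : 4 ≤ n) (M : Type*)
    (g ginv : M → Fin n → Fin n → ℝ)
    (B : M → ℝ) (DA DB : M → Fin n → ℝ)
    (u : M → Fin n → ℝ) (Du : M → Fin n → Fin n → ℝ)
    (hginv : ∀ x i j, ∑ m, ginv x i m * g x m j = if i = j then (1:ℝ) else 0)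
    (hginvsymm : ∀ x i j, ginv x i j = ginv x j i)
    -- u is a unit timelike vector field: u^j u_j = -1
    (hunit : ∀ x, ∑ i, ∑ j, ginv x i j * u x i * u x j = -1)
    -- u has constant length, hence u^l ∇_k u_l = 0
    (hDu : ∀ x k, ∑ l, ∑ m, ginv x l m * u x m * Du x k l = 0)
    -- contracted Bianchi identity ∇^m R_{jm} = (1/2)∇_j R
    (hBianchi : ∀ x j, ∑ a, ∑ m, ginv x a m *
        (DA x a * g x m j + DB x a * u x m * u x j
          + B x * (Du x a m * u x j + u x m * Du x a j))
      = (1/2) * ((n:ℝ) * DA x j - DB x j))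
    -- ∇_m C_{jkl}{}^m = 0, in its equivalent Codazzi form for the Ricci tensor
    (hWeyl : ∀ x k l j,
        (DA x k * g x j l + DB x k * u x j * u x l
          + B x * (Du x k j * u x l + u x j * Du x k l))
        - (DA x l * g x j k + DB x l * u x j * u x k
          + B x * (Du x l j * u x k + u x j * Du x l k))
      = (1/(2*((n:ℝ) - 1))) * (g x j l * ((n:ℝ) * DA x k - DB x k)
          - g x j k * ((n:ℝ) * DA x l - DB x l))) :
    -- conclusion: ∇_j γ + u_j u^k ∇_k γ = 0, equivalently u_j ∇_k γ = u_k ∇_j γ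
    (∀ x j, (((n:ℝ) - 2) * DA x j + DB x j)
        + u x j * (∑ k, ∑ m, ginv x k m * u x m * (((n:ℝ) - 2) * DA x k + DB x k)) = 0)
    ∧ (∀ x j k, u x j * (((n:ℝ) - 2) * DA x k + DB x k)
        = u x k * (((n:ℝ) - 2) * DA x j + DB x j)) := by
  have hunit' := fun x => (sum_sum_mul_mul_eq_mulVec_dotProduct (ginv x) (u x) (u x)).symm.trans <|
    (Finset.sum_congr rfl fun i _ => Finset.sum_congr rfl fun j _ => mul_right_comm ..).trans
      (hunit x)
  have hgrad : ∀ x, ∃ T : ℝ, ∀ k, ((n:ℝ) - 2) * DA x k + DB x k = T * u x k := fun x =>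
    exists_grad_gamma_eq_mul (by omega) (ext fun i j => (mul_apply ..).trans (hginv x i j))
      (ext fun i j => hginvsymm x j i) (hunit' x)
      (fun k => (sum_sum_mul_mul_eq_mulVec_dotProduct ..).symm.trans (hDu x k))
      (hBianchi x) (hWeyl x)
  refine ⟨fun x j => ?_, fun x j k => ?_⟩ <;> obtain ⟨T, hT⟩ := hgrad x
  · exact add_mul_sum_sum_eq_zero (hunit' x) hT j
  · rw [hT j, hT k]
    ring

theorem perfectFluid_gradient_gamma
    (n : ℕ) (hn : 4 ≤ n) (M : Type*)
    (g ginv : M → Fin n → Fin n → ℝ)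
    (A B : M → ℝ) (DA DB : M → Fin n → ℝ)
    (u : M → Fin n → ℝ) (Du : M → Fin n → Fin n → ℝ)
    (hg : ∀ x i j, g x i j = g x j i)
    (hginv : ∀ x i j, ∑ m, ginv x i m * g x m j = if i = j then (1:ℝ) else 0)
    (hginvsymm : ∀ x i j, ginv x i j = ginv x j i)
    -- u is a unit timelike vector field: u^j u_j = -1
    (hunit : ∀ x, ∑ i, ∑ j, ginv x i j * u x i * u x j = -1)
    -- u has constant length, hence u^l ∇_k u_l = 0
    (hDu : ∀ x k, ∑ l, ∑ m, ginv x l m * u x m * Du x k l = 0)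
    -- contracted Bianchi identity ∇^m R_{jm} = (1/2)∇_j R
    (hBianchi : ∀ x j, ∑ a, ∑ m, ginv x a m *
        (DA x a * g x m j + DB x a * u x m * u x j
          + B x * (Du x a m * u x j + u x m * Du x a j))
      = (1/2) * ((n:ℝ) * DA x j - DB x j))
    -- ∇_m C_{jkl}{}^m = 0, in its equivalent Codazzi form for the Ricci tensor
    (hWeyl : ∀ x k l j,
        (DA x k * g x j l + DB x k * u x j * u x l
          + B x * (Du x k j * u x l + u x j * Du x k l))
        - (DA x l * g x j k + DB x l * u x j * u x k
          + B x * (Du x l j * u x k + u x j * Du x l k))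
      = (1/(2*((n:ℝ) - 1))) * (g x j l * ((n:ℝ) * DA x k - DB x k)
          - g x j k * ((n:ℝ) * DA x l - DB x l))) :
    -- conclusion: ∇_j γ + u_j u^k ∇_k γ = 0, equivalently u_j ∇_k γ = u_k ∇_j γ
    (∀ x j, (((n:ℝ) - 2) * DA x j + DB x j)
        + u x j * (∑ k, ∑ m, ginv x k m * u x m * (((n:ℝ) - 2) * DA x k + DB x k)) = 0)
    ∧ (∀ x j k, u x j * (((n:ℝ) - 2) * DA x k + DB x k)
        = u x k * (((n:ℝ) - 2) * DA x j + DB x j)) :=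
  perfectFluid_gradient_gamma_general n hn M g ginv B DA DB u Du hginv hginvsymm hunit hDu hBianchi
    hWeyl
end

section
/- Let (M,g) be a perfect fluid space-time of dimension n ≥ 4 with R_{kl} = A g_{kl} + B u_k u_l, u^j u_j = −1, and ∇_m C_{jkl}{}^m = 0. Set γ = (n−2)A + B. Then (∇_j + u_j u^k ∇_k)B + B u^m ∇_m u_j = 0. -/
/-!
At each point the claim is linear algebra. Write `U = u^♯`. Contracting the Codazzi form of
`∇_m C_{jkl}{}^m = 0` with `U^j U^l`, the contracted Bianchi identity with `U^j`, and using
`U^j u_j = -1`, `U^l ∇_k u_l = 0`, leaves three linear relations among `∇_j A`, `∇_j B`,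
`U^k ∇_k A`, `U^k ∇_k B`, `∇^k u_k` and `U^k ∇_k u_j`, and the combination
`(n-1)·(U U·Weyl)_j - (Bianchi)_j - u_j·(U·Bianchi)` is `(n-2)` times the claimed expression.
-/

open Matrix

namespace PerfectFluid

variable {R : Type*} [CommRing R] {ι : Type*} [Fintype ι]

theorem vecMul_mulVec_of_mul_eq_one [DecidableEq ι] {g gi : Matrix ι ι R} (hinv : gi * g = 1)
    (hsymm : gi.IsSymm) (v : ι → R) : (gi *ᵥ v) ᵥ* g = v := by
  rw [← vecMul_transpose, hsymm.eq, vecMul_vecMul, hinv, vecMul_one]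

/-- `∇_k R_{jl}` for the Ricci tensor `R_{jl} = A g_{jl} + B u_j u_l` of a perfect fluid, where
`DA = ∇A`, `DB = ∇B`, `Du k l = ∇_k u_l` and `∇g = 0`. -/
def covDerivRicci (g Du : Matrix ι ι R) (u DA DB : ι → R) (B : R) (k j l : ι) : R :=
  DA k * g j l + DB k * u j * u l + B * (Du k j * u l + u j * Du k l)

section Contraction

variable {g Du : Matrix ι ι R} {u U DA DB : ι → R} {B : R}

theorem sum_mul_covDerivRicci (hUg : U ᵥ* g = u) (hUu : U ⬝ᵥ u = -1) (hUDu : Du *ᵥ U = 0)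
    (k l : ι) :
    ∑ j, U j * covDerivRicci g Du u DA DB B k j l = (DA k - DB k) * u l - B * Du k l :=
  calc ∑ j, U j * covDerivRicci g Du u DA DB B k j l
      = DA k * (U ᵥ* g) l + (DB k * u l + B * Du k l) * (U ⬝ᵥ u)
        + B * u l * (Du *ᵥ U) k := by
        simp only [vecMul, dotProduct, mulVec, covDerivRicci, Finset.mul_sum,
          ← Finset.sum_add_distrib]
        exact Finset.sum_congr rfl fun j _ => by ring
    _ = (DA k - DB k) * u l - B * Du k l := by rw [hUg, hUu, hUDu, Pi.zero_apply]; ring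

theorem sum_mul_sum_mul_covDerivRicci_sub (hUg : U ᵥ* g = u) (hUu : U ⬝ᵥ u = -1)
    (hUDu : Du *ᵥ U = 0) (k : ι) :
    ∑ l, U l * ∑ j, U j *
        (covDerivRicci g Du u DA DB B k j l - covDerivRicci g Du u DA DB B l j k)
      = DB k - DA k - (U ⬝ᵥ DA - U ⬝ᵥ DB) * u k + B * (U ᵥ* Du) k :=
  calc _ = ∑ l, U l *
        ((DA k - DB k) * u l - B * Du k l - ((DA l - DB l) * u k - B * Du l k)) := by
        simp only [mul_sub, Finset.sum_sub_distrib, sum_mul_covDerivRicci hUg hUu hUDu]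
    _ = (DA k - DB k) * (U ⬝ᵥ u) - B * (Du *ᵥ U) k
        - ((U ⬝ᵥ DA - U ⬝ᵥ DB) * u k - B * (U ᵥ* Du) k) := by
        simp only [vecMul, dotProduct, mulVec, Finset.mul_sum, Finset.sum_mul,
          ← Finset.sum_sub_distrib]
        exact Finset.sum_congr rfl fun l _ => by ring
    _ = _ := by rw [hUu, hUDu, Pi.zero_apply]; ring

theorem weyl_double_contraction (hUg : U ᵥ* g = u) (hUu : U ⬝ᵥ u = -1) (hUDu : Du *ᵥ U = 0)
    {c : R} {E : ι → R}
    (hW : ∀ k l j, covDerivRicci g Du u DA DB B k j l - covDerivRicci g Du u DA DB B l j k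
      = c * (g j l * E k - g j k * E l)) (k : ι) :
    DB k - DA k - (U ⬝ᵥ DA - U ⬝ᵥ DB) * u k + B * (U ᵥ* Du) k
      = c * (-E k - u k * (U ⬝ᵥ E)) := by
  rw [← sum_mul_sum_mul_covDerivRicci_sub hUg hUu hUDu k]
  calc _ = ∑ l, U l * (c * (E k * (U ᵥ* g) l - E l * (U ᵥ* g) k)) := by
        simp only [hW, vecMul, dotProduct, Finset.mul_sum, ← Finset.sum_sub_distrib]
        exact Finset.sum_congr rfl fun l _ => Finset.sum_congr rfl fun j _ => by ring
    _ = c * (E k * (U ⬝ᵥ u) - u k * (U ⬝ᵥ E)) := by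
        simp only [hUg, dotProduct, Finset.mul_sum, ← Finset.sum_sub_distrib]
        exact Finset.sum_congr rfl fun l _ => by ring
    _ = _ := by rw [hUu]; ring

theorem sum_sum_mul_covDerivRicci [DecidableEq ι] {gi : Matrix ι ι R} (hinv : gi * g = 1)
    (j : ι) :
    ∑ a, ∑ m, gi a m * covDerivRicci g Du u DA DB B a m j
      = DA j + ((gi *ᵥ u) ⬝ᵥ DB + B * ∑ a, ∑ m, gi a m * Du a m) * u j
        + B * ((gi *ᵥ u) ᵥ* Du) j :=
  calc _ = (DA ᵥ* (gi * g)) j + ((gi *ᵥ u) ⬝ᵥ DB + B * ∑ a, ∑ m, gi a m * Du a m) * u j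
        + B * ((gi *ᵥ u) ᵥ* Du) j := by
        simp only [mul_apply, vecMul, dotProduct, mulVec, covDerivRicci, Finset.mul_sum,
          Finset.sum_mul, ← Finset.sum_add_distrib]
        exact Finset.sum_congr rfl fun a _ => Finset.sum_congr rfl fun m _ => by ring
    _ = _ := by rw [hinv, vecMul_one]

theorem sum_mul_sum_sum_mul_covDerivRicci [DecidableEq ι] {gi : Matrix ι ι R}
    (hinv : gi * g = 1) (hUu : (gi *ᵥ u) ⬝ᵥ u = -1) (hUDu : Du *ᵥ (gi *ᵥ u) = 0) :
    ∑ j, (gi *ᵥ u) j * ∑ a, ∑ m, gi a m * covDerivRicci g Du u DA DB B a m j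
      = (gi *ᵥ u) ⬝ᵥ DA - (gi *ᵥ u) ⬝ᵥ DB - B * ∑ a, ∑ m, gi a m * Du a m := by
  set U := gi *ᵥ u
  have hUP : (U ᵥ* Du) ⬝ᵥ U = 0 := by rw [← dotProduct_mulVec, hUDu, dotProduct_zero]
  calc _ = U ⬝ᵥ DA + (U ⬝ᵥ DB + B * ∑ a, ∑ m, gi a m * Du a m) * (U ⬝ᵥ u)
        + B * ((U ᵥ* Du) ⬝ᵥ U) := by
        simp only [sum_sum_mul_covDerivRicci hinv, dotProduct, Finset.mul_sum,
          ← Finset.sum_add_distrib]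
        exact Finset.sum_congr rfl fun j _ => by ring
    _ = _ := by rw [hUu, hUP]; ring

end Contraction

theorem gradient_B_eq_zero [DecidableEq ι] {g gi Du : Matrix ι ι ℝ} {u DA DB : ι → ℝ}
    {B N : ℝ}
    (hN₁ : N ≠ 1) (hN₂ : N ≠ 2) (hinv : gi * g = 1) (hsymm : gi.IsSymm)
    (hunit : (gi *ᵥ u) ⬝ᵥ u = -1) (hDu : Du *ᵥ (gi *ᵥ u) = 0)
    (hBianchi : ∀ j, ∑ a, ∑ m, gi a m * covDerivRicci g Du u DA DB B a m j
      = 1 / 2 * (N * DA j - DB j))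
    (hWeyl : ∀ k l j, covDerivRicci g Du u DA DB B k j l - covDerivRicci g Du u DA DB B l j k
      = 1 / (2 * (N - 1)) * (g j l * (N * DA k - DB k) - g j k * (N * DA l - DB l)))
    (j : ι) :
    DB j + u j * ((gi *ᵥ u) ⬝ᵥ DB) + B * ((gi *ᵥ u) ᵥ* Du) j = 0 := by
  have hdiv := (sum_sum_mul_covDerivRicci hinv j).symm.trans (hBianchi j)
  have hdivU := sum_mul_sum_sum_mul_covDerivRicci hinv hunit hDu (B := B) (DA := DA) (DB := DB)
  have hweyl := weyl_double_contraction (vecMul_mulVec_of_mul_eq_one hinv hsymm u) hunit hDu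
    (E := N • DA - DB) hWeyl j
  set U := gi *ᵥ u
  set θ := ∑ a, ∑ m, gi a m * Du a m
  have hdivU' : U ⬝ᵥ DA - U ⬝ᵥ DB - B * θ = 1 / 2 * (N * (U ⬝ᵥ DA) - U ⬝ᵥ DB) := by
    rw [← hdivU]
    simp only [hBianchi, dotProduct, Finset.mul_sum, ← Finset.sum_sub_distrib]
    exact Finset.sum_congr rfl fun j _ => by ring
  have hweyl' : 2 * (N - 1) * (DB j - DA j - (U ⬝ᵥ DA - U ⬝ᵥ DB) * u j + B * (U ᵥ* Du) j)
      = -(N * DA j - DB j) - u j * (N * (U ⬝ᵥ DA) - U ⬝ᵥ DB) := by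
    rw [hweyl, Pi.sub_apply, Pi.smul_apply, dotProduct_sub, dotProduct_smul, smul_eq_mul,
      smul_eq_mul]
    field_simp [sub_ne_zero.mpr hN₁]
  have key : (N - 2) * (DB j + u j * (U ⬝ᵥ DB) + B * (U ᵥ* Du) j) = 0 := by
    linear_combination -hdiv - u j * hdivU' + 1 / 2 * hweyl'
  exact (mul_eq_zero.mp key).resolve_left (sub_ne_zero.mpr hN₂)

end PerfectFluid

theorem perfectFluid_gradient_B_general
    (n : ℕ) (hn : 4 ≤ n) (M : Type*)
    (g ginv : M → Fin n → Fin n → ℝ)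
    (B : M → ℝ) (DA DB : M → Fin n → ℝ)
    (u : M → Fin n → ℝ) (Du : M → Fin n → Fin n → ℝ)
    (hginv : ∀ x i j, ∑ m, ginv x i m * g x m j = if i = j then (1:ℝ) else 0)
    (hginvsymm : ∀ x i j, ginv x i j = ginv x j i)
    -- u is a unit timelike vector field: u^j u_j = -1
    (hunit : ∀ x, ∑ i, ∑ j, ginv x i j * u x i * u x j = -1)
    -- u has constant length, hence u^l ∇_k u_l = 0
    (hDu : ∀ x k, ∑ l, ∑ m, ginv x l m * u x m * Du x k l = 0)
    -- contracted Bianchi identity ∇^m R_{jm} = (1/2)∇_j R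
    (hBianchi : ∀ x j, ∑ a, ∑ m, ginv x a m *
        (DA x a * g x m j + DB x a * u x m * u x j
          + B x * (Du x a m * u x j + u x m * Du x a j))
      = (1/2) * ((n:ℝ) * DA x j - DB x j))
    -- ∇_m C_{jkl}{}^m = 0, in its equivalent Codazzi form for the Ricci tensor
    (hWeyl : ∀ x k l j,
        (DA x k * g x j l + DB x k * u x j * u x l
          + B x * (Du x k j * u x l + u x j * Du x k l))
        - (DA x l * g x j k + DB x l * u x j * u x k
          + B x * (Du x l j * u x k + u x j * Du x l k))
      = (1/(2*((n:ℝ) - 1))) * (g x j l * ((n:ℝ) * DA x k - DB x k)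
          - g x j k * ((n:ℝ) * DA x l - DB x l))) :
    -- conclusion: (∇_j + u_j u^k∇_k)B + B u^m∇_m u_j = 0
    ∀ x j, DB x j + u x j * (∑ k, ∑ m, ginv x k m * u x m * DB x k)
      + B x * (∑ k, ∑ m, ginv x k m * u x m * Du x k j) = 0 := by
  intro x j
  simpa [dotProduct, mulVec, vecMul, Finset.sum_mul] using
    PerfectFluid.gradient_B_eq_zero (g := g x) (gi := ginv x) (N := n)
      (by exact_mod_cast (by omega : n ≠ 1)) (by exact_mod_cast (by omega : n ≠ 2))
      (by ext i k; exact hginv x i k)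
      (by ext i k; exact hginvsymm x k i)
      (by simpa [dotProduct, mulVec, Finset.mul_sum, mul_comm, mul_left_comm] using hunit x)
      (by ext k; simpa [dotProduct, mulVec, Finset.mul_sum, mul_comm] using hDu x k)
      (hBianchi x) (hWeyl x) j

theorem perfectFluid_gradient_B
    (n : ℕ) (hn : 4 ≤ n) (M : Type*)
    (g ginv : M → Fin n → Fin n → ℝ)
    (A B : M → ℝ) (DA DB : M → Fin n → ℝ)
    (u : M → Fin n → ℝ) (Du : M → Fin n → Fin n → ℝ)
    (hg : ∀ x i j, g x i j = g x j i)
    (hginv : ∀ x i j, ∑ m, ginv x i m * g x m j = if i = j then (1:ℝ) else 0)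
    (hginvsymm : ∀ x i j, ginv x i j = ginv x j i)
    -- u is a unit timelike vector field: u^j u_j = -1
    (hunit : ∀ x, ∑ i, ∑ j, ginv x i j * u x i * u x j = -1)
    -- u has constant length, hence u^l ∇_k u_l = 0
    (hDu : ∀ x k, ∑ l, ∑ m, ginv x l m * u x m * Du x k l = 0)
    -- contracted Bianchi identity ∇^m R_{jm} = (1/2)∇_j R
    (hBianchi : ∀ x j, ∑ a, ∑ m, ginv x a m *
        (DA x a * g x m j + DB x a * u x m * u x j
          + B x * (Du x a m * u x j + u x m * Du x a j))
      = (1/2) * ((n:ℝ) * DA x j - DB x j))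
    -- ∇_m C_{jkl}{}^m = 0, in its equivalent Codazzi form for the Ricci tensor
    (hWeyl : ∀ x k l j,
        (DA x k * g x j l + DB x k * u x j * u x l
          + B x * (Du x k j * u x l + u x j * Du x k l))
        - (DA x l * g x j k + DB x l * u x j * u x k
          + B x * (Du x l j * u x k + u x j * Du x l k))
      = (1/(2*((n:ℝ) - 1))) * (g x j l * ((n:ℝ) * DA x k - DB x k)
          - g x j k * ((n:ℝ) * DA x l - DB x l))) :
    -- conclusion: (∇_j + u_j u^k∇_k)B + B u^m∇_m u_j = 0
    ∀ x j, DB x j + u x j * (∑ k, ∑ m, ginv x k m * u x m * DB x k)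
      + B x * (∑ k, ∑ m, ginv x k m * u x m * Du x k j) = 0 :=
  perfectFluid_gradient_B_general n hn M g ginv B DA DB u Du hginv hginvsymm hunit hDu hBianchi
    hWeyl
end

section
/- Let (M,g) be a perfect fluid space-time of dimension n ≥ 4 with R_{kl} = A g_{kl} + B u_k u_l, u^j u_j = −1, ∇_m C_{jkl}{}^m = 0, and B nowhere zero. If moreover u is closed (∇_k u_j = ∇_j u_k), then u is torse-forming: ∇_k u_j = ω_k u_j + f g_{kj}, where ω_k = ∇_k γ /(2B(n−1)), f = −u^m ∇_m γ /(2B(n−1)), and γ = (n−2)A + B. -/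
/-!
Contract everything with `u^j`. Since `u` is unit and closed, `u^m ∇_k u_m = u^m ∇_m u_k = 0`,
so the contracted Bianchi identity says that `(n-2)∇A - ∇B` is parallel to `u`, while contracting
the Codazzi form of `∇_m C_{jkl}{}^m = 0` with `u^j` relates `∇A ∧ u` and `∇B ∧ u`. Together they
give `(n-2)² ∇A ∧ u = 0`, hence `∇B ∧ u = 0`, i.e. `∇B = -(u^m ∇_m B) u`. Contracting the Codazzi
identity with `u` over its other index then expresses `B ∇_k u_j` through `∇A`, `∇B`, `u` and `g`;
substituting `∇B ∥ u` yields the torse-forming formula.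
-/

open Finset

namespace PerfectFluid

theorem sum_sum_mul_mul_eq_self {ι R : Type*} [Fintype ι] [DecidableEq ι] [CommSemiring R]
    {G H : ι → ι → R} (hHG : ∀ i j, ∑ m, H i m * G m j = if i = j then 1 else 0)
    (hH : ∀ i j, H i j = H j i) (v : ι → R) (p : ι) :
    ∑ m, (∑ a, H m a * v a) * G m p = v p := by
  calc ∑ m, (∑ a, H m a * v a) * G m p = ∑ a, v a * ∑ m, H a m * G m p := by
        simp only [sum_mul, mul_sum]
        rw [sum_comm]
        exact sum_congr rfl fun a _ => sum_congr rfl fun m _ => by rw [hH]; ring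
    _ = v p := by simp [hHG]

def Parallel {ι R : Type*} [Mul R] (X u : ι → R) : Prop :=
  ∀ p q, X p * u q = X q * u p

theorem Parallel.eq_neg_mul {ι R : Type*} [Fintype ι] [CommRing R] {U u X : ι → R}
    (hX : Parallel X u) (hUu : ∑ m, U m * u m = -1) (p : ι) :
    X p = -(∑ m, U m * X m) * u p := by
  have h : X p * ∑ m, U m * u m = (∑ m, U m * X m) * u p := by
    rw [mul_sum, sum_mul]
    exact sum_congr rfl fun m _ => by linear_combination U m * hX p m
  rw [hUu] at h
  linear_combination -h

variable {ι : Type*} {g ginv Du : ι → ι → ℝ} {U u DA DB : ι → ℝ} {B n : ℝ}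

theorem bianchi_contraction [Fintype ι] [DecidableEq ι]
    (hginv : ∀ i j, ∑ m, ginv i m * g m j = if i = j then (1:ℝ) else 0)
    (hUDu : ∀ p, ∑ a, (∑ m, ginv a m * u m) * Du a p = 0) (p : ι)
    (hBianchi : ∑ a, ∑ m, ginv a m *
        (DA a * g m p + DB a * u m * u p + B * (Du a m * u p + u m * Du a p))
      = (1/2) * (n * DA p - DB p)) :
    (n - 2) * DA p - DB p
      = 2 * (∑ a, (∑ m, ginv a m * u m) * DB a + B * ∑ a, ∑ m, ginv a m * Du a m) * u p := by
  have hcontr : ∑ a, ∑ m, ginv a m *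
        (DA a * g m p + DB a * u m * u p + B * (Du a m * u p + u m * Du a p))
      = ∑ a, (DA a * ∑ m, ginv a m * g m p + u p * ((∑ m, ginv a m * u m) * DB a)
          + B * u p * ∑ m, ginv a m * Du a m + B * ((∑ m, ginv a m * u m) * Du a p)) :=
    sum_congr rfl fun a _ => by
      simp only [mul_sum, sum_mul, ← sum_add_distrib]
      exact sum_congr rfl fun m _ => by ring
  simp only [hcontr, sum_add_distrib, ← mul_sum, hginv, hUDu, mul_ite, mul_one, mul_zero,
    sum_ite_eq', mem_univ, if_true] at hBianchi
  linear_combination -2 * hBianchi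

theorem codazzi_contract_last [Fintype ι] (hUg : ∀ p, ∑ m, U m * g m p = u p)
    (hUu : ∑ m, U m * u m = -1) (hUDu : ∀ p, ∑ m, U m * Du p m = 0) (p q : ι)
    (hW : ∀ j, (DA p * g j q + DB p * u j * u q + B * (Du p j * u q + u j * Du p q))
        - (DA q * g j p + DB q * u j * u p + B * (Du q j * u p + u j * Du q p))
      = (1 / (2 * (n - 1))) * (g j q * (n * DA p - DB p) - g j p * (n * DA q - DB q))) :
    (DA p - DB p) * u q - B * Du p q - ((DA q - DB q) * u p - B * Du q p)
      = (1 / (2 * (n - 1))) * ((n * DA p - DB p) * u q - (n * DA q - DB q) * u p) := by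
  have hcontr : ∑ j, (DA p * (U j * g j q) - DA q * (U j * g j p) + B * u q * (U j * Du p j)
        - B * u p * (U j * Du q j)
        + (DB p * u q + B * Du p q - DB q * u p - B * Du q p) * (U j * u j))
      = ∑ j, ((1 / (2 * (n - 1))) * (n * DA p - DB p) * (U j * g j q)
        - (1 / (2 * (n - 1))) * (n * DA q - DB q) * (U j * g j p)) :=
    sum_congr rfl fun j _ => by linear_combination U j * hW j
  simp only [sum_add_distrib, sum_sub_distrib, ← mul_sum, hUg, hUu, hUDu] at hcontr
  linear_combination hcontr

theorem DB_parallel (hn₁ : n ≠ 1) (hn₂ : n ≠ 2) {c : ℝ}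
    (hBianchi : ∀ p, (n - 2) * DA p - DB p = c * u p)
    (hW : ∀ p q, (DA p - DB p) * u q - B * Du p q - ((DA q - DB q) * u p - B * Du q p)
      = (1 / (2 * (n - 1))) * ((n * DA p - DB p) * u q - (n * DA q - DB q) * u p))
    (hclosed : ∀ p q, Du p q = Du q p) : Parallel DB u := by
  intro p q
  have hWpq := hW p q
  have hn' : n - 1 ≠ 0 := sub_ne_zero.mpr hn₁
  field_simp at hWpq
  have hDA : (n - 2) ^ 2 * (DA p * u q - DA q * u p) = 0 := by
    linear_combination (n - 3/2) * u q * hBianchi p - (n - 3/2) * u p * hBianchi q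
      - (1/2) * hWpq - (n - 1) * B * hclosed p q
  have hDA' : DA p * u q - DA q * u p = 0 :=
    (mul_eq_zero.mp hDA).resolve_left (pow_ne_zero 2 (sub_ne_zero.mpr hn₂))
  linear_combination (n - 2) * hDA' - u q * hBianchi p + u p * hBianchi q

theorem codazzi_contract_mid [Fintype ι] (hg : ∀ i j, g i j = g j i)
    (hUg : ∀ p, ∑ m, U m * g m p = u p) (hUu : ∑ m, U m * u m = -1)
    (hUDu : ∀ p, ∑ m, U m * Du p m = 0) (hUDu' : ∀ p, ∑ m, U m * Du m p = 0) (p q : ι)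
    (hW : ∀ l, (DA p * g q l + DB p * u q * u l + B * (Du p q * u l + u q * Du p l))
        - (DA l * g q p + DB l * u q * u p + B * (Du l q * u p + u q * Du l p))
      = (1 / (2 * (n - 1))) * (g q l * (n * DA p - DB p) - g q p * (n * DA l - DB l))) :
    DA p * u q - DB p * u q - B * Du p q - (∑ m, U m * DA m) * g q p
        - (∑ m, U m * DB m) * u q * u p
      = (1 / (2 * (n - 1)))
        * ((n * DA p - DB p) * u q - g q p * (n * ∑ m, U m * DA m - ∑ m, U m * DB m)) := by
  have hcontr : ∑ l, (DA p * (U l * g l q) + (DB p * u q + B * Du p q) * (U l * u l)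
        + B * u q * (U l * Du p l) - g q p * (U l * DA l) - u q * u p * (U l * DB l)
        - B * u p * (U l * Du l q) - B * u q * (U l * Du l p))
      = ∑ l, ((1 / (2 * (n - 1))) * (n * DA p - DB p) * (U l * g l q)
        - (1 / (2 * (n - 1))) * n * g q p * (U l * DA l)
        + (1 / (2 * (n - 1))) * g q p * (U l * DB l)) :=
    sum_congr rfl fun l _ => by
      have hWl := hW l
      rw [hg q l] at hWl
      linear_combination U l * hWl
  simp only [sum_add_distrib, sum_sub_distrib, ← mul_sum, hUg, hUu, hUDu, hUDu'] at hcontr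
  linear_combination hcontr

end PerfectFluid

open PerfectFluid

theorem perfectFluid_torse_forming_general
    (n : ℕ) (hn : 4 ≤ n) (M : Type*)
    (g ginv : M → Fin n → Fin n → ℝ)
    (B : M → ℝ) (DA DB : M → Fin n → ℝ)
    (u : M → Fin n → ℝ) (Du : M → Fin n → Fin n → ℝ)
    (hg : ∀ x i j, g x i j = g x j i)
    (hginv : ∀ x i j, ∑ m, ginv x i m * g x m j = if i = j then (1:ℝ) else 0)
    (hginvsymm : ∀ x i j, ginv x i j = ginv x j i)
    -- u is a unit timelike vector field: u^j u_j = -1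
    (hunit : ∀ x, ∑ i, ∑ j, ginv x i j * u x i * u x j = -1)
    -- u has constant length, hence u^l ∇_k u_l = 0
    (hDu : ∀ x k, ∑ l, ∑ m, ginv x l m * u x m * Du x k l = 0)
    -- contracted Bianchi identity ∇^m R_{jm} = (1/2)∇_j R
    (hBianchi : ∀ x j, ∑ a, ∑ m, ginv x a m *
        (DA x a * g x m j + DB x a * u x m * u x j
          + B x * (Du x a m * u x j + u x m * Du x a j))
      = (1/2) * ((n:ℝ) * DA x j - DB x j))
    -- ∇_m C_{jkl}{}^m = 0, in its equivalent Codazzi form for the Ricci tensor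
    (hWeyl : ∀ x k l j,
        (DA x k * g x j l + DB x k * u x j * u x l
          + B x * (Du x k j * u x l + u x j * Du x k l))
        - (DA x l * g x j k + DB x l * u x j * u x k
          + B x * (Du x l j * u x k + u x j * Du x l k))
      = (1/(2*((n:ℝ) - 1))) * (g x j l * ((n:ℝ) * DA x k - DB x k)
          - g x j k * ((n:ℝ) * DA x l - DB x l)))
    -- B nowhere zero
    (hB : ∀ x, B x ≠ 0)
    -- u is closed
    (hclosed : ∀ x k j, Du x k j = Du x j k) :
    -- conclusion: u is torse-forming with the given ω and f
    ∀ x k j, Du x k j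
      = ((((n:ℝ) - 2) * DA x k + DB x k) / (2 * B x * ((n:ℝ) - 1))) * u x j
        + (-(∑ m, ∑ a, ginv x m a * u x a * (((n:ℝ) - 2) * DA x m + DB x m))
            / (2 * B x * ((n:ℝ) - 1))) * g x k j := by
  intro x k j
  have hn₁ : (n : ℝ) ≠ 1 := by norm_cast; omega
  have hn₂ : (n : ℝ) ≠ 2 := by norm_cast; omega
  set U : Fin n → ℝ := fun i => ∑ a, ginv x i a * u x a
  have hUg : ∀ p, ∑ m, U m * g x m p = u x p :=
    sum_sum_mul_mul_eq_self (hginv x) (hginvsymm x) (u x)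
  have hUu : ∑ m, U m * u x m = -1 := by
    simpa only [U, sum_mul, mul_right_comm] using hunit x
  have hUDu : ∀ p, ∑ m, U m * Du x p m = 0 := fun p => by
    simpa only [U, sum_mul] using hDu x p
  have hUDu' : ∀ p, ∑ m, U m * Du x m p = 0 := fun p => by
    simpa only [hclosed x _ p] using hUDu p
  have hDB : Parallel (DB x) (u x) :=
    DB_parallel hn₁ hn₂ (fun p => bianchi_contraction (hginv x) hUDu' p (hBianchi x p))
      (fun p q => codazzi_contract_last hUg hUu hUDu p q (hWeyl x p q)) (hclosed x)
  have hγ : ∑ m, ∑ a, ginv x m a * u x a * (((n:ℝ) - 2) * DA x m + DB x m)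
      = ((n:ℝ) - 2) * ∑ m, U m * DA x m + ∑ m, U m * DB x m := by
    simp only [U, sum_mul, mul_sum, ← sum_add_distrib]
    exact sum_congr rfl fun m _ => sum_congr rfl fun a _ => by ring
  have hcontr := codazzi_contract_mid (hg x) hUg hUu hUDu hUDu' k j (fun l => hWeyl x k l j)
  have hn₁' : (n : ℝ) - 1 ≠ 0 := sub_ne_zero.mpr hn₁
  have hBx := hB x
  rw [hγ, hg x k j]
  field_simp at hcontr ⊢
  linear_combination -hcontr - (2 * (n : ℝ) - 2) * u x j * hDB.eq_neg_mul hUu k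

theorem perfectFluid_torse_forming
    (n : ℕ) (hn : 4 ≤ n) (M : Type*)
    (g ginv : M → Fin n → Fin n → ℝ)
    (A B : M → ℝ) (DA DB : M → Fin n → ℝ)
    (u : M → Fin n → ℝ) (Du : M → Fin n → Fin n → ℝ)
    (hg : ∀ x i j, g x i j = g x j i)
    (hginv : ∀ x i j, ∑ m, ginv x i m * g x m j = if i = j then (1:ℝ) else 0)
    (hginvsymm : ∀ x i j, ginv x i j = ginv x j i)
    -- u is a unit timelike vector field: u^j u_j = -1
    (hunit : ∀ x, ∑ i, ∑ j, ginv x i j * u x i * u x j = -1)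
    -- u has constant length, hence u^l ∇_k u_l = 0
    (hDu : ∀ x k, ∑ l, ∑ m, ginv x l m * u x m * Du x k l = 0)
    -- contracted Bianchi identity ∇^m R_{jm} = (1/2)∇_j R
    (hBianchi : ∀ x j, ∑ a, ∑ m, ginv x a m *
        (DA x a * g x m j + DB x a * u x m * u x j
          + B x * (Du x a m * u x j + u x m * Du x a j))
      = (1/2) * ((n:ℝ) * DA x j - DB x j))
    -- ∇_m C_{jkl}{}^m = 0, in its equivalent Codazzi form for the Ricci tensor
    (hWeyl : ∀ x k l j,
        (DA x k * g x j l + DB x k * u x j * u x l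
          + B x * (Du x k j * u x l + u x j * Du x k l))
        - (DA x l * g x j k + DB x l * u x j * u x k
          + B x * (Du x l j * u x k + u x j * Du x l k))
      = (1/(2*((n:ℝ) - 1))) * (g x j l * ((n:ℝ) * DA x k - DB x k)
          - g x j k * ((n:ℝ) * DA x l - DB x l)))
    -- B nowhere zero
    (hB : ∀ x, B x ≠ 0)
    -- u is closed
    (hclosed : ∀ x k j, Du x k j = Du x j k) :
    -- conclusion: u is torse-forming with the given ω and f
    ∀ x k j, Du x k j
      = ((((n:ℝ) - 2) * DA x k + DB x k) / (2 * B x * ((n:ℝ) - 1))) * u x j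
        + (-(∑ m, ∑ a, ginv x m a * u x a * (((n:ℝ) - 2) * DA x m + DB x m))
            / (2 * B x * ((n:ℝ) - 1))) * g x k j :=
  perfectFluid_torse_forming_general n hn M g ginv B DA DB u Du hg hginv hginvsymm hunit hDu
    hBianchi hWeyl hB hclosed
end

section
/- Under the hypotheses of the previous statement (perfect fluid space-time with divergence-free Weyl tensor, u closed, B nowhere zero), the 1-form ω_k = ∇_k γ /(2B(n−1)) appearing in the torse-forming equation ∇_k u_j = ω_k u_j + f g_{kj} is closed: ∇_j ω_k − ∇_k ω_j = 0. Hence u is a concircular vector field. -/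
/-!
Write `U = g⁻¹ u` for the velocity with raised index. Contracting the contracted Bianchi identity
shows that `∇((n-2)A - B)` is proportional to `u`; contracting the Codazzi form of `div C = 0` once
with `U` (the closedness of `u` cancels the `∇u` terms) shows that
`∇A - ∇B - (n∇A - ∇B)/(2(n-1))` is proportional to `u` as well. For `n ≥ 3` both `∇B` and
`∇γ = (n-2)∇A + ∇B` therefore lie on the line `ℝ u`, so `∇_k γ ∇_j B = ∇_j γ ∇_k B`. As the Hessian
of `γ` is symmetric, this is exactly the vanishing of `∇_j ω_k - ∇_k ω_j`.
-/

open Matrix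

theorem mem_span_singleton_of_mul_eq_mul {K ι : Type*} [Field K] {u v : ι → K} (hu : u ≠ 0)
    (h : ∀ i j, v i * u j = v j * u i) : v ∈ K ∙ u := by
  obtain ⟨j, hj⟩ := Function.ne_iff.mp hu
  refine Submodule.mem_span_singleton.mpr ⟨v j / u j, funext fun i => ?_⟩
  simp only [Pi.smul_apply, smul_eq_mul, Pi.zero_apply] at hj ⊢
  field_simp
  linear_combination h j i

theorem mul_eq_mul_of_mem_span_singleton {R ι : Type*} [CommRing R] {u v w : ι → R}
    (hv : v ∈ R ∙ u) (hw : w ∈ R ∙ u) (i j : ι) : v i * w j = v j * w i := by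
  obtain ⟨a, rfl⟩ := Submodule.mem_span_singleton.mp hv
  obtain ⟨b, rfl⟩ := Submodule.mem_span_singleton.mp hw
  simp only [Pi.smul_apply, smul_eq_mul]
  ring

theorem vecMul_mulVec_of_mul_eq_one {ι R : Type*} [Fintype ι] [DecidableEq ι] [CommRing R]
    {g ginv : Matrix ι ι R} (hinv : ginv * g = 1) (hsymm : ginvᵀ = ginv) (u : ι → R) :
    (ginv *ᵥ u) ᵥ* g = u := by
  rw [← vecMul_transpose, hsymm, vecMul_vecMul, hinv, vecMul_one]

section PerfectFluid

variable {n : ℕ} {g ginv Du : Matrix (Fin n) (Fin n) ℝ} {U u DA DB : Fin n → ℝ} {B : ℝ}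

/-- `∇_k R_{jl}` for the perfect-fluid Ricci tensor `R_{jl} = A g_{jl} + B u_j u_l`, where
`DA = ∇A`, `DB = ∇B`, `Du k j = ∇_k u_j` and `∇g = 0`. -/
def perfectFluidRicciDeriv (g Du : Matrix (Fin n) (Fin n) ℝ) (u DA DB : Fin n → ℝ) (B : ℝ)
    (k j l : Fin n) : ℝ :=
  DA k * g j l + DB k * u j * u l + B * (Du k j * u l + u j * Du k l)

theorem sum_ginv_mul_perfectFluidRicciDeriv
    (hinv : ∀ i j, ∑ m, ginv i m * g m j = if i = j then 1 else 0)
    (hUDu : ∀ k, (ginv *ᵥ u) ⬝ᵥ Du k = 0) (hclosed : ∀ k j, Du k j = Du j k) (j : Fin n) :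
    ∑ a, ∑ m, ginv a m * perfectFluidRicciDeriv g Du u DA DB B a m j
      = DA j + (DB ⬝ᵥ (ginv *ᵥ u) + B * ∑ a, ∑ m, ginv a m * Du a m) * u j := by
  have hsplit : ∀ a m, ginv a m * perfectFluidRicciDeriv g Du u DA DB B a m j
      = DA a * (ginv a m * g m j) + DB a * (ginv a m * u m) * u j
        + B * (ginv a m * Du a m) * u j + B * (ginv a m * u m * Du j a) := by
    intro a m
    rw [perfectFluidRicciDeriv, hclosed a j]
    ring
  have hUDuj := hUDu j
  simp only [dotProduct, mulVec] at hUDuj ⊢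
  simp only [hsplit, Finset.sum_add_distrib, ← Finset.mul_sum, ← Finset.sum_mul, hinv, hUDuj,
    mul_ite, mul_one, mul_zero, Finset.sum_ite_eq', Finset.mem_univ, if_true]
  ring

theorem sub_mem_span_of_contracted_bianchi
    (hinv : ∀ i j, ∑ m, ginv i m * g m j = if i = j then 1 else 0)
    (hUDu : ∀ k, (ginv *ᵥ u) ⬝ᵥ Du k = 0) (hclosed : ∀ k j, Du k j = Du j k)
    (hBianchi : ∀ j, ∑ a, ∑ m, ginv a m * perfectFluidRicciDeriv g Du u DA DB B a m j
      = (1/2) * ((n:ℝ) * DA j - DB j)) :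
    ((n:ℝ) - 2) • DA - DB ∈ ℝ ∙ u := by
  refine Submodule.mem_span_singleton.mpr
    ⟨2 * (DB ⬝ᵥ (ginv *ᵥ u) + B * ∑ a, ∑ m, ginv a m * Du a m), funext fun j => ?_⟩
  have hj := hBianchi j
  rw [sum_ginv_mul_perfectFluidRicciDeriv hinv hUDu hclosed] at hj
  simp only [Pi.sub_apply, Pi.smul_apply, smul_eq_mul]
  linear_combination 2 * hj

theorem sub_mem_span_of_codazzi (hlow : U ᵥ* g = u) (hUu : U ⬝ᵥ u = -1)
    (hUDu : ∀ k, U ⬝ᵥ Du k = 0) (hclosed : ∀ k j, Du k j = Du j k)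
    (hWeyl : ∀ k l j,
      perfectFluidRicciDeriv g Du u DA DB B k j l - perfectFluidRicciDeriv g Du u DA DB B l j k
        = (1/(2*((n:ℝ) - 1))) * (g j l * ((n:ℝ) * DA k - DB k) - g j k * ((n:ℝ) * DA l - DB l))) :
    DA - DB - (1/(2*((n:ℝ) - 1))) • ((n:ℝ) • DA - DB) ∈ ℝ ∙ u := by
  refine mem_span_singleton_of_mul_eq_mul (by rintro rfl; simp at hUu) fun k l => ?_
  set c := 1/(2*((n:ℝ) - 1))
  have hL : ∀ j, U j * (perfectFluidRicciDeriv g Du u DA DB B k j l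
        - perfectFluidRicciDeriv g Du u DA DB B l j k)
      = DA k * (U j * g j l) - DA l * (U j * g j k)
        + (DB k * u l + B * Du k l - DB l * u k - B * Du l k) * (U j * u j)
        + B * u l * (U j * Du k j) - B * u k * (U j * Du l j) := fun j => by
    simp only [perfectFluidRicciDeriv]
    ring
  have hR : ∀ j, U j * (c * (g j l * ((n:ℝ) * DA k - DB k) - g j k * ((n:ℝ) * DA l - DB l)))
      = c * ((n * DA k - DB k) * (U j * g j l)) - c * ((n * DA l - DB l) * (U j * g j k)) :=
    fun j => by ring
  have hsum := Finset.sum_congr rfl fun j (_ : j ∈ Finset.univ) =>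
    congrArg (U j * ·) (hWeyl k l j)
  have hlow' : ∀ i, ∑ j, U j * g j i = u i := fun i => congrFun hlow i
  have hUDu' : ∀ i, ∑ j, U j * Du i j = 0 := hUDu
  have hUu' : ∑ j, U j * u j = -1 := hUu
  simp only [hL, hR, Finset.sum_add_distrib, Finset.sum_sub_distrib, ← Finset.mul_sum, hlow',
    hUDu', hUu'] at hsum
  simp only [Pi.sub_apply, Pi.smul_apply, smul_eq_mul]
  linear_combination hsum + B * hclosed k l

theorem mem_span_singleton_of_bianchi_of_codazzi {ι : Type*} {u DA DB : ι → ℝ} (hn : 3 ≤ n)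
    (hP : ((n:ℝ) - 2) • DA - DB ∈ ℝ ∙ u)
    (hQ : DA - DB - (1/(2*((n:ℝ) - 1))) • ((n:ℝ) • DA - DB) ∈ ℝ ∙ u) :
    DB ∈ ℝ ∙ u := by
  have hn' : (3:ℝ) ≤ n := by exact_mod_cast hn
  have hn1 : (n:ℝ) - 1 ≠ 0 := by linarith
  have hn2 : 2 * (n:ℝ) - 4 ≠ 0 := by linarith
  convert Submodule.smul_mem _ (1 / (2 * (n:ℝ) - 4))
    (Submodule.sub_mem _ hP (Submodule.smul_mem _ (2 * ((n:ℝ) - 1)) hQ)) using 1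
  ext i
  simp only [Pi.sub_apply, Pi.smul_apply, smul_eq_mul]
  field_simp
  ring

end PerfectFluid

theorem perfectFluid_omega_closed_concircular_general
    (n : ℕ) (hn : 4 ≤ n) (M : Type*)
    (g ginv : M → Fin n → Fin n → ℝ)
    (B : M → ℝ) (DA DB : M → Fin n → ℝ)
    (u : M → Fin n → ℝ) (Du : M → Fin n → Fin n → ℝ)
    (D2γ : M → Fin n → Fin n → ℝ)
    (hginv : ∀ x i j, ∑ m, ginv x i m * g x m j = if i = j then (1:ℝ) else 0)
    (hginvsymm : ∀ x i j, ginv x i j = ginv x j i)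
    -- u is a unit timelike vector field: u^j u_j = -1
    (hunit : ∀ x, ∑ i, ∑ j, ginv x i j * u x i * u x j = -1)
    -- u has constant length, hence u^l ∇_k u_l = 0
    (hDu : ∀ x k, ∑ l, ∑ m, ginv x l m * u x m * Du x k l = 0)
    -- contracted Bianchi identity ∇^m R_{jm} = (1/2)∇_j R
    (hBianchi : ∀ x j, ∑ a, ∑ m, ginv x a m *
        (DA x a * g x m j + DB x a * u x m * u x j
          + B x * (Du x a m * u x j + u x m * Du x a j))
      = (1/2) * ((n:ℝ) * DA x j - DB x j))
    -- ∇_m C_{jkl}{}^m = 0, in its equivalent Codazzi form for the Ricci tensor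
    (hWeyl : ∀ x k l j,
        (DA x k * g x j l + DB x k * u x j * u x l
          + B x * (Du x k j * u x l + u x j * Du x k l))
        - (DA x l * g x j k + DB x l * u x j * u x k
          + B x * (Du x l j * u x k + u x j * Du x l k))
      = (1/(2*((n:ℝ) - 1))) * (g x j l * ((n:ℝ) * DA x k - DB x k)
          - g x j k * ((n:ℝ) * DA x l - DB x l)))
    -- u is closed
    (hclosed : ∀ x k j, Du x k j = Du x j k)
    -- second covariant derivative of the scalar γ is symmetric
    (hD2γsymm : ∀ x j k, D2γ x j k = D2γ x k j) :
    -- conclusion: ∇_j ω_k - ∇_k ω_j = 0, i.e. ω is closed and u is concircular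
    ∀ x j k,
      (1/(2*((n:ℝ) - 1))) * ((B x * D2γ x j k
          - (((n:ℝ) - 2) * DA x k + DB x k) * DB x j) / (B x)^2)
      - (1/(2*((n:ℝ) - 1))) * ((B x * D2γ x k j
          - (((n:ℝ) - 2) * DA x j + DB x j) * DB x k) / (B x)^2) = 0 := by
  intro x j k
  have hlow : (ginv x *ᵥ u x) ᵥ* g x = u x := vecMul_mulVec_of_mul_eq_one
    (Matrix.ext fun i j => mul_apply.trans ((hginv x i j).trans one_apply.symm))
    (Matrix.ext fun i j => hginvsymm x j i) (u x)
  have hUu : (ginv x *ᵥ u x) ⬝ᵥ u x = -1 := by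
    simpa [dotProduct, mulVec, Finset.sum_mul, mul_right_comm] using hunit x
  have hUDu : ∀ k, (ginv x *ᵥ u x) ⬝ᵥ Du x k = 0 := fun k => by
    simpa [dotProduct, mulVec, Finset.sum_mul] using hDu x k
  have hP := sub_mem_span_of_contracted_bianchi (hginv x) hUDu (hclosed x) (hBianchi x)
  have hQ := sub_mem_span_of_codazzi hlow hUu hUDu (hclosed x) (hWeyl x)
  have hDB := mem_span_singleton_of_bianchi_of_codazzi (by omega) hP hQ
  have hγ : ((n:ℝ) - 2) • DA x + DB x ∈ ℝ ∙ u x := by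
    convert Submodule.add_mem _ hP (Submodule.smul_mem _ 2 hDB) using 1
    ext i
    simp only [Pi.add_apply, Pi.sub_apply, Pi.smul_apply, smul_eq_mul]
    ring
  have hsym := mul_eq_mul_of_mem_span_singleton hγ hDB k j
  simp only [Pi.add_apply, Pi.smul_apply, smul_eq_mul] at hsym
  rw [hD2γsymm x j k, hsym, sub_self]

theorem perfectFluid_omega_closed_concircular
    (n : ℕ) (hn : 4 ≤ n) (M : Type*)
    (g ginv : M → Fin n → Fin n → ℝ)
    (A B : M → ℝ) (DA DB : M → Fin n → ℝ)
    (u : M → Fin n → ℝ) (Du : M → Fin n → Fin n → ℝ)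
    (D2γ : M → Fin n → Fin n → ℝ)
    (hg : ∀ x i j, g x i j = g x j i)
    (hginv : ∀ x i j, ∑ m, ginv x i m * g x m j = if i = j then (1:ℝ) else 0)
    (hginvsymm : ∀ x i j, ginv x i j = ginv x j i)
    -- u is a unit timelike vector field: u^j u_j = -1
    (hunit : ∀ x, ∑ i, ∑ j, ginv x i j * u x i * u x j = -1)
    -- u has constant length, hence u^l ∇_k u_l = 0
    (hDu : ∀ x k, ∑ l, ∑ m, ginv x l m * u x m * Du x k l = 0)
    -- contracted Bianchi identity ∇^m R_{jm} = (1/2)∇_j R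
    (hBianchi : ∀ x j, ∑ a, ∑ m, ginv x a m *
        (DA x a * g x m j + DB x a * u x m * u x j
          + B x * (Du x a m * u x j + u x m * Du x a j))
      = (1/2) * ((n:ℝ) * DA x j - DB x j))
    -- ∇_m C_{jkl}{}^m = 0, in its equivalent Codazzi form for the Ricci tensor
    (hWeyl : ∀ x k l j,
        (DA x k * g x j l + DB x k * u x j * u x l
          + B x * (Du x k j * u x l + u x j * Du x k l))
        - (DA x l * g x j k + DB x l * u x j * u x k
          + B x * (Du x l j * u x k + u x j * Du x l k))
      = (1/(2*((n:ℝ) - 1))) * (g x j l * ((n:ℝ) * DA x k - DB x k)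
          - g x j k * ((n:ℝ) * DA x l - DB x l)))
    -- B nowhere zero
    (hB : ∀ x, B x ≠ 0)
    -- u is closed
    (hclosed : ∀ x k j, Du x k j = Du x j k)
    -- second covariant derivative of the scalar γ is symmetric
    (hD2γsymm : ∀ x j k, D2γ x j k = D2γ x k j) :
    -- conclusion: ∇_j ω_k - ∇_k ω_j = 0, i.e. ω is closed and u is concircular
    ∀ x j k,
      (1/(2*((n:ℝ) - 1))) * ((B x * D2γ x j k
          - (((n:ℝ) - 2) * DA x k + DB x k) * DB x j) / (B x)^2)
      - (1/(2*((n:ℝ) - 1))) * ((B x * D2γ x k j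
          - (((n:ℝ) - 2) * DA x j + DB x j) * DB x k) / (B x)^2) = 0 :=
  perfectFluid_omega_closed_concircular_general n hn M g ginv B DA DB u Du D2γ hginv hginvsymm hunit
    hDu hBianchi hWeyl hclosed hD2γsymm
end

section
/- Let (M,g) be a perfect fluid space-time of dimension n ≥ 4 with R_{kl} = A g_{kl} + B u_k u_l, admitting a timelike vector X proportional to u with ∇_k X_l = ρ g_{kl}. Then the Weyl tensor annihilates X: C_{jklm} X^m = 0, hence C_{jkl}{}^m u_m = 0. -/
/-!
Contracting the Weyl tensor with `u^m`, every term is a multiple of `u_j g_kl - u_k g_jl`: the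
Riemann part by hypothesis, the Ricci part because `g_jm u^m = u_j` and `u_m u^m = -1`. The three
coefficients `(A - B)/(1 - n)`, `(2A - B)/(n - 2)` and `-(nA - B)/((n - 1)(n - 2))` cancel. Since
`X = c u` with `c ≠ 0` (`X` is timelike), the hypothesis on `R_jklm X^m` gives `R_jklm u^m`, and
both claims follow by scaling.
-/

/-- The Weyl tensor C_{jklm} of a perfect fluid space-time, with
R_{kl} = A g_{kl} + B u_k u_l and R = nA - B substituted into the defining formula
C_{jklm} = R_{jklm} + (1/(n-2))(g_{jm}R_{kl} - g_{km}R_{jl} + R_{jm}g_{kl} - R_{km}g_{jl})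
           - (R/((n-1)(n-2)))(g_{jm}g_{kl} - g_{mk}g_{jl}). -/
noncomputable def weylPF (n : ℕ) {M : Type*}
    (g : M → Fin n → Fin n → ℝ)
    (Riem : M → Fin n → Fin n → Fin n → Fin n → ℝ)
    (A B : M → ℝ) (u : M → Fin n → ℝ)
    (x : M) (j k l m : Fin n) : ℝ :=
  Riem x j k l m
  + (1/((n:ℝ) - 2)) *
      (g x j m * (A x * g x k l + B x * u x k * u x l)
        - g x k m * (A x * g x j l + B x * u x j * u x l)
        + (A x * g x j m + B x * u x j * u x m) * g x k l
        - (A x * g x k m + B x * u x k * u x m) * g x j l)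
  - (((n:ℝ) * A x - B x) / (((n:ℝ) - 1) * ((n:ℝ) - 2)))
      * (g x j m * g x k l - g x m k * g x j l)

open Matrix

section Contraction

variable {ι R : Type*} [Fintype ι]

theorem sum_sum_mul_mul_eq_dotProduct_mulVec [NonUnitalSemiring R] (T V : ι → R) (G : ι → ι → R) :
    ∑ m, ∑ a, T a * G a m * V m = T ⬝ᵥ (of G *ᵥ V) := by
  simp only [dotProduct, mulVec, of_apply, Finset.mul_sum, mul_assoc]
  exact Finset.sum_comm

theorem sum_sum_mul_mul_eq_dotProduct_mulVec_of_symm [NonUnitalCommSemiring R] {G : ι → ι → R}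
    (hG : ∀ i j, G i j = G j i) (T V : ι → R) :
    ∑ m, ∑ a, G m a * T a * V m = T ⬝ᵥ (of G *ᵥ V) := by
  rw [← sum_sum_mul_mul_eq_dotProduct_mulVec]
  refine Finset.sum_congr rfl fun m _ => Finset.sum_congr rfl fun a _ => ?_
  rw [hG, mul_comm (G a m)]

theorem dotProduct_mulVec_of_sum_mul_eq_ite [DecidableEq ι] [CommRing R] {G Gi : ι → ι → R}
    (h : ∀ i j, ∑ m, Gi i m * G m j = if i = j then 1 else 0) (v : ι → R) (i : ι) :
    G i ⬝ᵥ (of Gi *ᵥ v) = v i := by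
  have hGGi : of G * of Gi = 1 :=
    mul_eq_one_comm.mp (Matrix.ext fun i j => by simpa [mul_apply, one_apply] using h i j)
  change (of G *ᵥ (of Gi *ᵥ v)) i = v i
  rw [mulVec_mulVec, hGGi, one_mulVec]

end Contraction

/-- The total coefficient of `u_j g_kl - u_k g_jl` in `C_jklm u^m`. -/
theorem weyl_coeff_eq_zero {n a b : ℝ} (hn1 : n ≠ 1) (hn2 : n ≠ 2) :
    (a - b) / (1 - n) + (2 * a - b) / (n - 2) - (n * a - b) / ((n - 1) * (n - 2)) = 0 := by
  have h1n : 1 - n ≠ 0 := sub_ne_zero.mpr (Ne.symm hn1)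
  have hn1' : n - 1 ≠ 0 := sub_ne_zero.mpr hn1
  have hn2' : n - 2 ≠ 0 := sub_ne_zero.mpr hn2
  field_simp
  ring

section PerfectFluid

variable {n : ℕ} {M : Type*} {g : M → Fin n → Fin n → ℝ}
  {Riem : M → Fin n → Fin n → Fin n → Fin n → ℝ} {A B : M → ℝ} {u : M → Fin n → ℝ} {x : M}

theorem weylPF_eq (hg : ∀ i j, g x i j = g x j i) (j k l : Fin n) :
    weylPF n g Riem A B u x j k l = Riem x j k l
      + ((2 * A x * g x k l + B x * u x k * u x l) / ((n : ℝ) - 2)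
          - (n * A x - B x) / ((n - 1) * (n - 2)) * g x k l) • g x j
      + ((n * A x - B x) / ((n - 1) * (n - 2)) * g x j l
          - (2 * A x * g x j l + B x * u x j * u x l) / ((n : ℝ) - 2)) • g x k
      + (B x * (u x j * g x k l - u x k * g x j l) / ((n : ℝ) - 2)) • u x := by
  funext a
  simp only [weylPF, Pi.add_apply, Pi.smul_apply, smul_eq_mul]
  rw [hg a k]
  ring

theorem weylPF_dotProduct_eq_zero (hn1 : (n : ℝ) ≠ 1) (hn2 : (n : ℝ) ≠ 2)
    (hg : ∀ i j, g x i j = g x j i) {Y : Fin n → ℝ} (hgY : ∀ i, g x i ⬝ᵥ Y = u x i)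
    (huY : u x ⬝ᵥ Y = -1) {j k l : Fin n}
    (hRY : Riem x j k l ⬝ᵥ Y = (A x - B x) / (1 - n) * (u x j * g x k l - u x k * g x j l)) :
    weylPF n g Riem A B u x j k l ⬝ᵥ Y = 0 := by
  rw [weylPF_eq hg]
  simp only [add_dotProduct, smul_dotProduct, smul_eq_mul, hgY, huY, hRY]
  linear_combination
    (u x j * g x k l - u x k * g x j l) * weyl_coeff_eq_zero (a := A x) (b := B x) hn1 hn2

end PerfectFluid

theorem perfectFluid_weyl_annihilates_X_general
    (n : ℕ) (hn : 4 ≤ n) (M : Type*)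
    (g ginv : M → Fin n → Fin n → ℝ)
    (Riem : M → Fin n → Fin n → Fin n → Fin n → ℝ)
    (A B : M → ℝ) (u : M → Fin n → ℝ)
    (X : M → Fin n → ℝ)
    (hg : ∀ x i j, g x i j = g x j i)
    (hginv : ∀ x i j, ∑ m, ginv x i m * g x m j = if i = j then (1:ℝ) else 0)
    (hginvsymm : ∀ x i j, ginv x i j = ginv x j i)
    -- u is a unit timelike vector field: u^j u_j = -1
    (hunit : ∀ x, ∑ i, ∑ j, ginv x i j * u x i * u x j = -1)
    -- X is proportional to u and timelike
    (hXu : ∀ x, ∃ c : ℝ, ∀ j, X x j = c * u x j)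
    (hXtime : ∀ x, ∑ i, ∑ j, ginv x i j * X x i * X x j < 0)
    -- identity R_{jklm}X^m = ((A-B)/(1-n))(X_j g_{kl} - X_k g_{jl})
    (hRiemX : ∀ x j k l, ∑ m, ∑ a, Riem x j k l a * ginv x a m * X x m
        = ((A x - B x) / (1 - (n:ℝ))) * (X x j * g x k l - X x k * g x j l)) :
    -- conclusions: C_{jklm}X^m = 0 and C_{jkl}{}^m u_m = 0
    (∀ x j k l, ∑ m, ∑ a, weylPF n g Riem A B u x j k l a * ginv x a m * X x m = 0)
    ∧ (∀ x j k l, ∑ m, ∑ a, ginv x m a * weylPF n g Riem A B u x j k l a * u x m = 0) := by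
  have hn4 : (4 : ℝ) ≤ n := by exact_mod_cast hn
  have hXsmul : ∀ x, ∃ c : ℝ, c ≠ 0 ∧ X x = c • u x := fun x => by
    obtain ⟨c, hc⟩ := hXu x
    refine ⟨c, fun hc0 => (hXtime x).ne ?_, funext hc⟩
    simp [hc, hc0]
  have hweyl : ∀ x j k l, weylPF n g Riem A B u x j k l ⬝ᵥ (of (ginv x) *ᵥ u x) = 0 := by
    intro x j k l
    obtain ⟨c, hc0, hX⟩ := hXsmul x
    refine weylPF_dotProduct_eq_zero (by linarith) (by linarith) (hg x)
      (dotProduct_mulVec_of_sum_mul_eq_ite (hginv x) (u x)) ?_ ?_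
    · simpa only [← sum_sum_mul_mul_eq_dotProduct_mulVec_of_symm (hginvsymm x), mul_right_comm]
        using hunit x
    · have hRX := hRiemX x j k l
      rw [sum_sum_mul_mul_eq_dotProduct_mulVec, hX] at hRX
      simp only [mulVec_smul, dotProduct_smul, Pi.smul_apply, smul_eq_mul] at hRX
      exact mul_left_cancel₀ hc0 (by rw [hRX]; ring)
  refine ⟨fun x j k l => ?_, fun x j k l => ?_⟩
  · obtain ⟨c, -, hX⟩ := hXsmul x
    rw [sum_sum_mul_mul_eq_dotProduct_mulVec, hX, mulVec_smul, dotProduct_smul, hweyl, smul_zero]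
  · rw [sum_sum_mul_mul_eq_dotProduct_mulVec_of_symm (hginvsymm x), hweyl]

theorem perfectFluid_weyl_annihilates_X
    (n : ℕ) (hn : 4 ≤ n) (M : Type*)
    (g ginv : M → Fin n → Fin n → ℝ)
    (Riem : M → Fin n → Fin n → Fin n → Fin n → ℝ)
    (A B : M → ℝ) (u : M → Fin n → ℝ)
    (X : M → Fin n → ℝ) (DX : M → Fin n → Fin n → ℝ)
    (ρ : M → ℝ) (Dρ : M → Fin n → ℝ)
    (hg : ∀ x i j, g x i j = g x j i)
    (hginv : ∀ x i j, ∑ m, ginv x i m * g x m j = if i = j then (1:ℝ) else 0)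
    (hginvsymm : ∀ x i j, ginv x i j = ginv x j i)
    -- u is a unit timelike vector field: u^j u_j = -1
    (hunit : ∀ x, ∑ i, ∑ j, ginv x i j * u x i * u x j = -1)
    -- X is proportional to u and timelike
    (hXu : ∀ x, ∃ c : ℝ, ∀ j, X x j = c * u x j)
    (hXtime : ∀ x, ∑ i, ∑ j, ginv x i j * X x i * X x j < 0)
    -- hypothesis: ∇_k X_l = ρ g_{kl}
    (hDX : ∀ x k l, DX x k l = ρ x * g x k l)
    -- identity R_{jklm}X^m = ((A-B)/(1-n))(X_j g_{kl} - X_k g_{jl})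
    (hRiemX : ∀ x j k l, ∑ m, ∑ a, Riem x j k l a * ginv x a m * X x m
        = ((A x - B x) / (1 - (n:ℝ))) * (X x j * g x k l - X x k * g x j l))
    -- Dρ is determined as in statement 8
    (hDρ : ∀ x j, Dρ x j = ((A x - B x) / (1 - (n:ℝ))) * X x j) :
    -- conclusions: C_{jklm}X^m = 0 and C_{jkl}{}^m u_m = 0
    (∀ x j k l, ∑ m, ∑ a, weylPF n g Riem A B u x j k l a * ginv x a m * X x m = 0)
    ∧ (∀ x j k l, ∑ m, ∑ a, ginv x m a * weylPF n g Riem A B u x j k l a * u x m = 0) :=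
  perfectFluid_weyl_annihilates_X_general n hn M g ginv Riem A B u X hg hginv hginvsymm hunit hXu
    hXtime hRiemX
end

section
/- Let (M,g) be a perfect fluid space-time of dimension n ≥ 4 with divergence-free Weyl tensor, energy density μ and pressure p related by a differentiable equation of state p = p(μ), and p + μ nowhere zero. Then the velocity field u is geodesic: u^k ∇_k u_j = 0. -/
/-!
Write `U = g⁻¹ u` for the velocity with raised index. Contracting the Codazzi form of
`∇_m C_{jkl}{}^m = 0` with `U^j U^l` and eliminating `U^k ∇_k u_j` by the Euler equation leaves
`κ (n - 2)² (∇_j μ + u_j U^m ∇_m μ) = 0`, so `μ` has no spatial gradient. By the equation of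
state neither has `p`, and the Euler equation reduces to `(p + μ) U^k ∇_k u_j = 0`.
-/

open Matrix

section Contraction

variable {ι R : Type*} [Fintype ι] [CommRing R]

theorem sum_sum_mul_eq_mulVec_dotProduct (G : Matrix ι ι R) (u v : ι → R) :
    ∑ k, ∑ a, G k a * u a * v k = (G *ᵥ u) ⬝ᵥ v := by
  simp only [dotProduct, mulVec, Finset.sum_mul]

theorem mulVec_vecMul_eq_self_of_mul_eq_one [DecidableEq ι] {g ginv : Matrix ι ι R}
    (hg : gᵀ = g) (hginv : ginv * g = 1) (u : ι → R) : (ginv *ᵥ u) ᵥ* g = u := by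
  rw [← hg, vecMul_transpose, mulVec_mulVec, mul_eq_one_comm.mp hginv, one_mulVec]

theorem codazzi_contract {g W : Matrix ι ι R} {u U a b : ι → R} {B c N : R}
    (hUu : U ⬝ᵥ u = -1) (hUg : U ᵥ* g = u) (hWU : W *ᵥ U = 0)
    (h : ∀ k l j, a k * g j l + b k * u j * u l + B * (W k j * u l + u j * W k l)
        - (a l * g j k + b l * u j * u k + B * (W l j * u k + u j * W l k))
      = c * (g j l * (N * a k - b k) - g j k * (N * a l - b l))) (k : ι) :
    -(a k + (U ⬝ᵥ a) * u k) + (b k + (U ⬝ᵥ b) * u k) + B * (U ᵥ* W) k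
      = -c * (N * (a k + (U ⬝ᵥ a) * u k) - (b k + (U ⬝ᵥ b) * u k)) := by
  -- the hypothesis at fixed `k`, as an identity of matrices indexed by `(j, l)`
  have hT : a k • g + b k • vecMulVec u u + B • (vecMulVec (W k) u + vecMulVec u (W k))
      - (vecMulVec (gᵀ k) a + u k • vecMulVec u b + B • (u k • Wᵀ + vecMulVec u (Wᵀ k)))
      = c • ((N * a k - b k) • g - vecMulVec (gᵀ k) (N • a - b)) := by
    ext j l
    simp only [Matrix.sub_apply, Matrix.add_apply, Matrix.smul_apply, vecMulVec_apply,
      transpose_apply, smul_eq_mul, Pi.sub_apply, Pi.smul_apply]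
    linear_combination h k l j
  have hc := congrArg (fun T => U ᵥ* T ⬝ᵥ U) hT
  simp only [vecMul_add, vecMul_sub, vecMul_smul, vecMul_vecMulVec, vecMul_transpose, hUg, hWU,
    add_dotProduct, sub_dotProduct, smul_dotProduct, smul_eq_mul, hUu] at hc
  have hgk : U ⬝ᵥ gᵀ k = u k := congrFun hUg k
  have hWk : W k ⬝ᵥ U = 0 := congrFun hWU k
  have hWtk : Wᵀ k ⬝ᵥ U = (U ᵥ* W) k := dotProduct_comm _ _
  rw [dotProduct_comm u U, hUu, dotProduct_comm U (W k), hWk, hgk, hWtk, dotProduct_comm a U,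
    dotProduct_comm b U, zero_dotProduct] at hc
  linear_combination hc

end Contraction

theorem eq_zero_of_codazzi_of_euler {N κ X Y w : ℝ} (hN1 : N ≠ 1) (hN2 : N ≠ 2) (hκ : κ ≠ 0)
    (hc : -(κ * (X - Y) / (2 - N)) + κ * (X + Y) + κ * w
      = -(1 / (2 * (N - 1))) * (N * (κ * (X - Y) / (2 - N)) - κ * (X + Y)))
    (he : X + w = 0) : Y = 0 := by
  field_simp at hc
  have key : (N - 2) ^ 2 * Y = 0 := by
    linear_combination (-1 / 2) * hc + (N - 1) * (2 - N) * he
  exact (mul_eq_zero.mp key).resolve_left (pow_ne_zero 2 (sub_ne_zero.mpr hN2))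

theorem perfectFluid_spatial_grad_energy_eq_zero {ι : Type*} [Fintype ι] {g W : Matrix ι ι ℝ}
    {u U Dp Dμ : ι → ℝ} {N κ ρ : ℝ} (hN1 : N ≠ 1) (hN2 : N ≠ 2) (hκ : κ ≠ 0)
    (hUu : U ⬝ᵥ u = -1) (hUg : U ᵥ* g = u) (hWU : W *ᵥ U = 0)
    (hcod : ∀ k l j,
        ((κ * (Dp k - Dμ k) / (2 - N)) * g j l + κ * (Dp k + Dμ k) * u j * u l
          + κ * ρ * (W k j * u l + u j * W k l))
        - ((κ * (Dp l - Dμ l) / (2 - N)) * g j k + κ * (Dp l + Dμ l) * u j * u k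
          + κ * ρ * (W l j * u k + u j * W l k))
      = (1 / (2 * (N - 1))) *
          (g j l * (N * (κ * (Dp k - Dμ k) / (2 - N)) - κ * (Dp k + Dμ k))
            - g j k * (N * (κ * (Dp l - Dμ l) / (2 - N)) - κ * (Dp l + Dμ l))))
    (heuler : ∀ j, Dp j + u j * (U ⬝ᵥ Dp) + ρ * (U ᵥ* W) j = 0) (j : ι) :
    Dμ j + u j * (U ⬝ᵥ Dμ) = 0 := by
  have hc := codazzi_contract hUu hUg hWU hcod j
  have ha : U ⬝ᵥ (fun k => κ * (Dp k - Dμ k) / (2 - N)) = κ / (2 - N) * (U ⬝ᵥ Dp - U ⬝ᵥ Dμ) := by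
    rw [← dotProduct_sub, ← smul_eq_mul, ← dotProduct_smul]
    congr 1
    funext k
    simp only [Pi.smul_apply, Pi.sub_apply, smul_eq_mul]
    ring
  have hb : U ⬝ᵥ (fun k => κ * (Dp k + Dμ k)) = κ * (U ⬝ᵥ Dp + U ⬝ᵥ Dμ) := by
    rw [← dotProduct_add, ← smul_eq_mul, ← dotProduct_smul]
    rfl
  rw [ha, hb] at hc
  refine eq_zero_of_codazzi_of_euler hN1 hN2 hκ ?_ (heuler j)
  linear_combination hc

theorem perfect_fluid_eos_geodesic_general
    (n : ℕ) (hn : 4 ≤ n) (M : Type*)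
    (g ginv : M → Fin n → Fin n → ℝ)
    (p μ : M → ℝ) (Dp Dμ : M → Fin n → ℝ)
    (u : M → Fin n → ℝ) (Du : M → Fin n → Fin n → ℝ)
    (κ : ℝ) (hκ : κ ≠ 0) (P : ℝ → ℝ)
    (hg : ∀ x i j, g x i j = g x j i)
    (hginv : ∀ x i j, ∑ m, ginv x i m * g x m j = if i = j then (1:ℝ) else 0)
    -- u is a unit timelike vector field: u^j u_j = -1, hence u^l ∇_k u_l = 0
    (hunit : ∀ x, ∑ i, ∑ j, ginv x i j * u x i * u x j = -1)
    (hDu : ∀ x k, ∑ l, ∑ m, ginv x l m * u x m * Du x k l = 0)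
    -- differentiable equation of state p = P(μ), with the chain rule ∇p = P'(μ)∇μ
    (hchain : ∀ x j, Dp x j = deriv P (μ x) * Dμ x j)
    -- p + μ nowhere zero
    (hpμ : ∀ x, p x + μ x ≠ 0)
    -- ∇_m C_{jkl}{}^m = 0 in its equivalent Codazzi form, with
    -- A = κ(p-μ)/(2-n), B = κ(p+μ), R = nA - B
    (hWeyl : ∀ x k l j,
        ((κ * (Dp x k - Dμ x k) / (2 - (n:ℝ))) * g x j l
          + κ * (Dp x k + Dμ x k) * u x j * u x l
          + κ * (p x + μ x) * (Du x k j * u x l + u x j * Du x k l))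
        - ((κ * (Dp x l - Dμ x l) / (2 - (n:ℝ))) * g x j k
          + κ * (Dp x l + Dμ x l) * u x j * u x k
          + κ * (p x + μ x) * (Du x l j * u x k + u x j * Du x l k))
      = (1/(2*((n:ℝ) - 1))) *
          (g x j l * ((n:ℝ) * (κ * (Dp x k - Dμ x k) / (2 - (n:ℝ)))
              - κ * (Dp x k + Dμ x k))
            - g x j k * ((n:ℝ) * (κ * (Dp x l - Dμ x l) / (2 - (n:ℝ)))
              - κ * (Dp x l + Dμ x l))))
    -- equations of motion (from ∇_k T^{kj} = 0)
    (hmot2 : ∀ x j, Dp x j + u x j * (∑ k, ∑ a, ginv x k a * u x a * Dp x k)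
        + (p x + μ x) * (∑ k, ∑ a, ginv x k a * u x a * Du x k j) = 0) :
    -- conclusion: u is geodesic
    ∀ x j, ∑ k, ∑ a, ginv x k a * u x a * Du x k j = 0 := by
  intro x j
  set U := ginv x *ᵥ u x
  have hraise : ∀ v : Fin n → ℝ, ∑ k, ∑ a, ginv x k a * u x a * v k = U ⬝ᵥ v :=
    sum_sum_mul_eq_mulVec_dotProduct (ginv x) (u x)
  have hUu : U ⬝ᵥ u x = -1 := by
    rw [← hraise, ← hunit x]
    exact Finset.sum_congr rfl fun _ _ => Finset.sum_congr rfl fun _ _ => by ring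
  have hUg : U ᵥ* g x = u x :=
    mulVec_vecMul_eq_self_of_mul_eq_one (g := g x) (ginv := ginv x)
      (Matrix.ext fun a b => hg x b a)
      (Matrix.ext fun a b => Matrix.mul_apply.trans ((hginv x a b).trans Matrix.one_apply.symm))
      (u x)
  have hWU : Du x *ᵥ U = 0 :=
    funext fun k => (dotProduct_comm _ _).trans ((hraise _).symm.trans (hDu x k))
  have heuler : ∀ k, Dp x k + u x k * (U ⬝ᵥ Dp x) + (p x + μ x) * (U ᵥ* Du x) k = 0 := by
    intro k
    have h := hmot2 x k
    rwa [hraise, hraise] at h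
  have hn4 : (4 : ℝ) ≤ n := by exact_mod_cast hn
  have hμ : Dμ x j + u x j * (U ⬝ᵥ Dμ x) = 0 :=
    perfectFluid_spatial_grad_energy_eq_zero (ne_of_gt (by linarith)) (ne_of_gt (by linarith)) hκ
      hUu hUg hWU (hWeyl x) heuler j
  have hp : Dp x j + u x j * (U ⬝ᵥ Dp x) = 0 := by
    rw [show Dp x = deriv P (μ x) • Dμ x from funext (hchain x), dotProduct_smul, Pi.smul_apply,
      smul_eq_mul, smul_eq_mul]
    linear_combination deriv P (μ x) * hμ
  have hρ : (p x + μ x) * (U ᵥ* Du x) j = 0 := by linear_combination heuler j - hp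
  rw [hraise]
  exact (mul_eq_zero.mp hρ).resolve_left (hpμ x)

theorem perfect_fluid_eos_geodesic
    (n : ℕ) (hn : 4 ≤ n) (M : Type*)
    (g ginv : M → Fin n → Fin n → ℝ)
    (p μ : M → ℝ) (Dp Dμ : M → Fin n → ℝ)
    (u : M → Fin n → ℝ) (Du : M → Fin n → Fin n → ℝ)
    (κ : ℝ) (hκ : κ ≠ 0) (P : ℝ → ℝ)
    (hg : ∀ x i j, g x i j = g x j i)
    (hginv : ∀ x i j, ∑ m, ginv x i m * g x m j = if i = j then (1:ℝ) else 0)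
    (hginvsymm : ∀ x i j, ginv x i j = ginv x j i)
    -- u is a unit timelike vector field: u^j u_j = -1, hence u^l ∇_k u_l = 0
    (hunit : ∀ x, ∑ i, ∑ j, ginv x i j * u x i * u x j = -1)
    (hDu : ∀ x k, ∑ l, ∑ m, ginv x l m * u x m * Du x k l = 0)
    -- differentiable equation of state p = P(μ), with the chain rule ∇p = P'(μ)∇μ
    (hP : Differentiable ℝ P)
    (heos : ∀ x, p x = P (μ x))
    (hchain : ∀ x j, Dp x j = deriv P (μ x) * Dμ x j)
    -- p + μ nowhere zero
    (hpμ : ∀ x, p x + μ x ≠ 0)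
    -- ∇_m C_{jkl}{}^m = 0 in its equivalent Codazzi form, with
    -- A = κ(p-μ)/(2-n), B = κ(p+μ), R = nA - B
    (hWeyl : ∀ x k l j,
        ((κ * (Dp x k - Dμ x k) / (2 - (n:ℝ))) * g x j l
          + κ * (Dp x k + Dμ x k) * u x j * u x l
          + κ * (p x + μ x) * (Du x k j * u x l + u x j * Du x k l))
        - ((κ * (Dp x l - Dμ x l) / (2 - (n:ℝ))) * g x j k
          + κ * (Dp x l + Dμ x l) * u x j * u x k
          + κ * (p x + μ x) * (Du x l j * u x k + u x j * Du x l k))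
      = (1/(2*((n:ℝ) - 1))) *
          (g x j l * ((n:ℝ) * (κ * (Dp x k - Dμ x k) / (2 - (n:ℝ)))
              - κ * (Dp x k + Dμ x k))
            - g x j k * ((n:ℝ) * (κ * (Dp x l - Dμ x l) / (2 - (n:ℝ)))
              - κ * (Dp x l + Dμ x l))))
    -- equations of motion (from ∇_k T^{kj} = 0)
    (hmot1 : ∀ x, (∑ k, ∑ a, ginv x k a * u x a * Dμ x k)
        + (p x + μ x) * (∑ k, ∑ a, ginv x k a * Du x k a) = 0)
    (hmot2 : ∀ x j, Dp x j + u x j * (∑ k, ∑ a, ginv x k a * u x a * Dp x k)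
        + (p x + μ x) * (∑ k, ∑ a, ginv x k a * u x a * Du x k j) = 0) :
    -- conclusion: u is geodesic
    ∀ x j, ∑ k, ∑ a, ginv x k a * u x a * Du x k j = 0 :=
  perfect_fluid_eos_geodesic_general n hn M g ginv p μ Dp Dμ u Du κ hκ P hg hginv hunit hDu hchain
    hpμ hWeyl hmot2
end

section
/- Under the same hypotheses (perfect fluid space-time, n ≥ 4, divergence-free Weyl tensor, equation of state p = p(μ) with p'(μ) ≠ 0, p + μ nowhere zero), the velocity field u is irrotational: ∇_k u_j = ∇_j u_k. -/
/-!
Contracting the Codazzi identity with `u^j` leaves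
`κ(p+μ)(∇_l u_k - ∇_k u_l) = u_l c_k - u_k c_l` with `c = κ∇p + κ(n-2)/(n-1) ∇μ`.
Contracting once more with `u^l` and comparing with the equation of motion shows that `∇μ`,
hence also `∇p = p'(μ)∇μ` and `c`, is parallel to `u`, so the right-hand side vanishes.
-/

open Matrix

section
variable {ι : Type*} [Fintype ι]

theorem sum_sum_mul_eq_mulVec_dotProduct_s18 (A : Matrix ι ι ℝ) (v w : ι → ℝ) :
    ∑ i, ∑ j, A i j * v j * w i = (A *ᵥ v) ⬝ᵥ w := by
  simp only [dotProduct, mulVec, Finset.sum_mul]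

theorem vecMul_mulVec_of_mul_eq_one_s18 [DecidableEq ι] {A B : Matrix ι ι ℝ} (hA : Aᵀ = A)
    (hAB : A * B = 1) (v : ι → ℝ) : (A *ᵥ v) ᵥ* B = v := by
  rw [← hA, mulVec_transpose, vecMul_vecMul, hAB, vecMul_one]

variable {D : Matrix ι ι ℝ} {u U : ι → ℝ}

theorem mul_sub_eq_wedge_of_codazzi {G : Matrix ι ι ℝ} {a b e : ι → ℝ} {β : ℝ}
    (hUu : U ⬝ᵥ u = -1) (hUG : U ᵥ* G = u) (hDU : D *ᵥ U = 0)
    (h : ∀ k l j, (a k * G j l + b k * u j * u l + β * (D k j * u l + u j * D k l))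
        - (a l * G j k + b l * u j * u k + β * (D l j * u k + u j * D l k))
      = G j l * e k - G j k * e l) (k l : ι) :
    β * (D l k - D k l) = u l * (e k - a k + b k) - u k * (e l - a l + b l) := by
  have hrel : (a k - e k) • Gᵀ l - (a l - e l) • Gᵀ k
      + (b k * u l - b l * u k + β * (D k l - D l k)) • u + (β * u l) • D k - (β * u k) • D l
      = 0 := by
    ext j
    simp only [Pi.add_apply, Pi.sub_apply, Pi.smul_apply, smul_eq_mul, transpose_apply,
      Pi.zero_apply]
    linear_combination h k l j
  have hUcol (i : ι) : U ⬝ᵥ Gᵀ i = u i := congrFun hUG i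
  have hUD (i : ι) : U ⬝ᵥ D i = 0 := (dotProduct_comm _ _).trans (congrFun hDU i)
  have hcontr := congrArg (U ⬝ᵥ ·) hrel
  simp only [dotProduct_add, dotProduct_sub, dotProduct_smul, smul_eq_mul, dotProduct_zero,
    hUu, hUcol, hUD] at hcontr
  linear_combination hcontr

theorem mul_vecMul_eq_of_wedge {c : ι → ℝ} {β : ℝ}
    (hUu : U ⬝ᵥ u = -1) (hDU : D *ᵥ U = 0)
    (h : ∀ k l, β * (D l k - D k l) = u l * c k - u k * c l) (k : ι) :
    β * (U ᵥ* D) k = -(c k + (U ⬝ᵥ c) * u k) := by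
  have hrel : β • (Dᵀ k - D k) = c k • u - u k • c := by
    ext l
    simp only [Pi.sub_apply, Pi.smul_apply, smul_eq_mul, transpose_apply]
    linear_combination h k l
  have hcontr := congrArg (U ⬝ᵥ ·) hrel
  have hUD : U ⬝ᵥ D k = 0 := (dotProduct_comm _ _).trans (congrFun hDU k)
  simp only [dotProduct_sub, dotProduct_smul, smul_eq_mul, hUu, hUD] at hcontr
  change β * (U ⬝ᵥ Dᵀ k) = _
  linear_combination hcontr

theorem add_dotProduct_mul_eq_zero_of_wedge {q m : ι → ℝ} {κ κ' ρ : ℝ} (hκ' : κ' ≠ 0)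
    (hUu : U ⬝ᵥ u = -1) (hDU : D *ᵥ U = 0)
    (hwedge : ∀ k l, κ * ρ * (D l k - D k l)
      = u l * (κ • q + κ' • m) k - u k * (κ • q + κ' • m) l)
    (hmot : ∀ k, q k + u k * (U ⬝ᵥ q) + ρ * (U ᵥ* D) k = 0) (k : ι) :
    m k + (U ⬝ᵥ m) * u k = 0 := by
  have hacc := mul_vecMul_eq_of_wedge hUu hDU hwedge k
  simp only [dotProduct_add, dotProduct_smul, Pi.add_apply, Pi.smul_apply, smul_eq_mul] at hacc
  refine (mul_eq_zero.mp ?_).resolve_left hκ'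
  linear_combination hacc - κ * hmot k

end

theorem eq_of_wedge_of_forall_eq_mul {ι : Type*} {D : Matrix ι ι ℝ} {u c : ι → ℝ} {β t : ℝ}
    (hβ : β ≠ 0) (h : ∀ k l, β * (D l k - D k l) = u l * c k - u k * c l) (hc : ∀ k, c k = t * u k)
    (k l : ι) : D l k = D k l := by
  have hβD : β * (D l k - D k l) = 0 := by linear_combination h k l + u l * hc k - u k * hc l
  exact sub_eq_zero.mp ((mul_eq_zero.mp hβD).resolve_left hβ)

theorem perfect_fluid_eos_irrotational_general
    (n : ℕ) (hn : 4 ≤ n) (M : Type*)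
    (g ginv : M → Fin n → Fin n → ℝ)
    (p μ : M → ℝ) (Dp Dμ : M → Fin n → ℝ)
    (u : M → Fin n → ℝ) (Du : M → Fin n → Fin n → ℝ)
    (κ : ℝ) (hκ : κ ≠ 0) (P : ℝ → ℝ)
    (hginv : ∀ x i j, ∑ m, ginv x i m * g x m j = if i = j then (1:ℝ) else 0)
    (hginvsymm : ∀ x i j, ginv x i j = ginv x j i)
    -- u is a unit timelike vector field: u^j u_j = -1, hence u^l ∇_k u_l = 0
    (hunit : ∀ x, ∑ i, ∑ j, ginv x i j * u x i * u x j = -1)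
    (hDu : ∀ x k, ∑ l, ∑ m, ginv x l m * u x m * Du x k l = 0)
    -- differentiable equation of state p = P(μ), with the chain rule ∇p = P'(μ)∇μ
    (hchain : ∀ x j, Dp x j = deriv P (μ x) * Dμ x j)
    -- p + μ nowhere zero
    (hpμ : ∀ x, p x + μ x ≠ 0)
    -- ∇_m C_{jkl}{}^m = 0 in its equivalent Codazzi form, with
    -- A = κ(p-μ)/(2-n), B = κ(p+μ), R = nA - B
    (hWeyl : ∀ x k l j,
        ((κ * (Dp x k - Dμ x k) / (2 - (n:ℝ))) * g x j l
          + κ * (Dp x k + Dμ x k) * u x j * u x l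
          + κ * (p x + μ x) * (Du x k j * u x l + u x j * Du x k l))
        - ((κ * (Dp x l - Dμ x l) / (2 - (n:ℝ))) * g x j k
          + κ * (Dp x l + Dμ x l) * u x j * u x k
          + κ * (p x + μ x) * (Du x l j * u x k + u x j * Du x l k))
      = (1/(2*((n:ℝ) - 1))) *
          (g x j l * ((n:ℝ) * (κ * (Dp x k - Dμ x k) / (2 - (n:ℝ)))
              - κ * (Dp x k + Dμ x k))
            - g x j k * ((n:ℝ) * (κ * (Dp x l - Dμ x l) / (2 - (n:ℝ)))
              - κ * (Dp x l + Dμ x l))))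
    -- equations of motion (from ∇_k T^{kj} = 0)
    (hmot2 : ∀ x j, Dp x j + u x j * (∑ k, ∑ a, ginv x k a * u x a * Dp x k)
        + (p x + μ x) * (∑ k, ∑ a, ginv x k a * u x a * Du x k j) = 0) :
    -- conclusion: u is irrotational
    ∀ x k j, Du x k j = Du x j k := by
  intro x k j
  have hn' : (4 : ℝ) ≤ n := by exact_mod_cast hn
  have hn1 : (n : ℝ) - 1 ≠ 0 := by linarith
  have hn2 : 2 - (n : ℝ) ≠ 0 := by linarith
  have hUu : (ginv x *ᵥ u x) ⬝ᵥ u x = -1 := by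
    rw [← sum_sum_mul_eq_mulVec_dotProduct_s18 (ginv x) (u x) (u x), ← hunit x]
    exact Finset.sum_congr rfl fun i _ => Finset.sum_congr rfl fun j _ => by ring
  have hUg : (ginv x *ᵥ u x) ᵥ* g x = u x :=
    vecMul_mulVec_of_mul_eq_one_s18 (Matrix.ext fun i j => hginvsymm x j i)
      (Matrix.ext fun i j => (hginv x i j).trans (Matrix.one_apply ..).symm) _
  have hDuU : Du x *ᵥ (ginv x *ᵥ u x) = 0 := funext fun k =>
    (dotProduct_comm _ _).trans ((sum_sum_mul_eq_mulVec_dotProduct_s18 _ _ _).symm.trans (hDu x k))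
  set κ' := κ * ((n : ℝ) - 2) / ((n : ℝ) - 1)
  set c := κ • Dp x + κ' • Dμ x
  have hwedge (k l : Fin n) :
      κ * (p x + μ x) * (Du x l k - Du x k l) = u x l * c k - u x k * c l := by
    rw [mul_sub_eq_wedge_of_codazzi hUu hUg hDuU
      (e := fun k =>
        (n * (κ * (Dp x k - Dμ x k) / (2 - n)) - κ * (Dp x k + Dμ x k)) / (2 * (n - 1)))
      (fun k l j => (hWeyl x k l j).trans (by ring))]
    simp only [c, κ', Pi.add_apply, Pi.smul_apply, smul_eq_mul]
    field_simp
    ring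
  have hμ := add_dotProduct_mul_eq_zero_of_wedge (div_ne_zero (mul_ne_zero hκ (by linarith)) hn1)
    hUu hDuU hwedge fun k => by
      have hmot := hmot2 x k
      rwa [sum_sum_mul_eq_mulVec_dotProduct_s18 (ginv x) (u x) (Dp x),
        sum_sum_mul_eq_mulVec_dotProduct_s18 (ginv x) (u x) (fun i => Du x i k)] at hmot
  refine eq_of_wedge_of_forall_eq_mul (mul_ne_zero hκ (hpμ x)) hwedge
    (t := -((κ * deriv P (μ x) + κ') * ((ginv x *ᵥ u x) ⬝ᵥ Dμ x))) (fun k => ?_) j k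
  simp only [c, Pi.add_apply, Pi.smul_apply, smul_eq_mul]
  linear_combination κ * hchain x k + (κ * deriv P (μ x) + κ') * hμ k

theorem perfect_fluid_eos_irrotational
    (n : ℕ) (hn : 4 ≤ n) (M : Type*)
    (g ginv : M → Fin n → Fin n → ℝ)
    (p μ : M → ℝ) (Dp Dμ : M → Fin n → ℝ)
    (u : M → Fin n → ℝ) (Du : M → Fin n → Fin n → ℝ)
    (κ : ℝ) (hκ : κ ≠ 0) (P : ℝ → ℝ)
    (hg : ∀ x i j, g x i j = g x j i)
    (hginv : ∀ x i j, ∑ m, ginv x i m * g x m j = if i = j then (1:ℝ) else 0)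
    (hginvsymm : ∀ x i j, ginv x i j = ginv x j i)
    -- u is a unit timelike vector field: u^j u_j = -1, hence u^l ∇_k u_l = 0
    (hunit : ∀ x, ∑ i, ∑ j, ginv x i j * u x i * u x j = -1)
    (hDu : ∀ x k, ∑ l, ∑ m, ginv x l m * u x m * Du x k l = 0)
    -- differentiable equation of state p = P(μ), with the chain rule ∇p = P'(μ)∇μ
    (hP : Differentiable ℝ P) (hP' : ∀ x, deriv P (μ x) ≠ 0)
    (heos : ∀ x, p x = P (μ x))
    (hchain : ∀ x j, Dp x j = deriv P (μ x) * Dμ x j)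
    -- p + μ nowhere zero
    (hpμ : ∀ x, p x + μ x ≠ 0)
    -- ∇_m C_{jkl}{}^m = 0 in its equivalent Codazzi form, with
    -- A = κ(p-μ)/(2-n), B = κ(p+μ), R = nA - B
    (hWeyl : ∀ x k l j,
        ((κ * (Dp x k - Dμ x k) / (2 - (n:ℝ))) * g x j l
          + κ * (Dp x k + Dμ x k) * u x j * u x l
          + κ * (p x + μ x) * (Du x k j * u x l + u x j * Du x k l))
        - ((κ * (Dp x l - Dμ x l) / (2 - (n:ℝ))) * g x j k
          + κ * (Dp x l + Dμ x l) * u x j * u x k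
          + κ * (p x + μ x) * (Du x l j * u x k + u x j * Du x l k))
      = (1/(2*((n:ℝ) - 1))) *
          (g x j l * ((n:ℝ) * (κ * (Dp x k - Dμ x k) / (2 - (n:ℝ)))
              - κ * (Dp x k + Dμ x k))
            - g x j k * ((n:ℝ) * (κ * (Dp x l - Dμ x l) / (2 - (n:ℝ)))
              - κ * (Dp x l + Dμ x l))))
    -- equations of motion (from ∇_k T^{kj} = 0)
    (hmot1 : ∀ x, (∑ k, ∑ a, ginv x k a * u x a * Dμ x k)
        + (p x + μ x) * (∑ k, ∑ a, ginv x k a * Du x k a) = 0)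
    (hmot2 : ∀ x j, Dp x j + u x j * (∑ k, ∑ a, ginv x k a * u x a * Dp x k)
        + (p x + μ x) * (∑ k, ∑ a, ginv x k a * u x a * Du x k j) = 0) :
    -- conclusion: u is irrotational
    ∀ x k j, Du x k j = Du x j k :=
  perfect_fluid_eos_irrotational_general n hn M g ginv p μ Dp Dμ u Du κ hκ P hginv hginvsymm hunit
    hDu hchain hpμ hWeyl hmot2
end
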